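/- arXiv:2310.05728 — 5 statements merged into one kernel-verified Lean document; each statement's English description precedes it below -/
import Mathlib

section
/- Let k, s ≥ 1 be integers and θ ∈ (0,1). Let Ω₁,…,Ω_k be finite nonempty sets, let X = (X₁,…,X_k) be uniformly distributed on Ω₁×⋯×Ω_k, and let Π be any function on Ω₁×⋯×Ω_k taking at most 2^s distinct values. For a value π with Pr(Π(X) = π) > 0, define L(π) := { i ∈ [k] : KL( law(X_i | Π(X) = π) ‖ 𝒰_{Ω_i} ) ≤ 4s + 4k·log₂(1/θ) }. Then Pr_{π ∼ Π(X)}( |L(π)| ≤ 3k/4 ) ≤ θ^k. -/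
open scoped Classical
open Finset

/-- KL-divergence (base-2 logarithms) between two distributions on a finite set. -/
noncomputable def KL {Ω : Type*} [Fintype Ω] (μ ν : Ω → ℝ) : ℝ :=
  ∑ x, if 0 < μ x then μ x * Real.logb 2 (μ x / ν x) else 0

/-- The uniform distribution on a finite set. -/
noncomputable def unif (Ω : Type*) [Fintype Ω] : Ω → ℝ := fun _ => 1 / (Fintype.card Ω : ℝ)

/-- The conditional law of the `i`-th coordinate of a uniformly random
`ω ∈ Ω₁ × ⋯ × Ω_k` given `Prot ω = π`. -/
noncomputable def condMarg {k : ℕ} {Ω : Fin k → Type*} [∀ i, Fintype (Ω i)] {T : Type*}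
    (Prot : (∀ i, Ω i) → T) (π : T) (i : Fin k) : Ω i → ℝ :=
  fun x => ((Finset.univ.filter (fun ω : ∀ j, Ω j => Prot ω = π ∧ ω i = x)).card : ℝ) /
           ((Finset.univ.filter (fun ω : ∀ j, Ω j => Prot ω = π)).card : ℝ)

lemma KL_eq_sum {Ω : Type*} [Fintype Ω] (μ : Ω → ℝ) (hμ : ∀ x, 0 ≤ μ x) :
    KL μ (unif Ω) = (∑ x, μ x * Real.log (μ x * (Fintype.card Ω : ℝ))) / Real.log 2 := by
  unfold KL unif
  rw [Finset.sum_div]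
  refine Finset.sum_congr rfl fun x _ => ?_
  rcases eq_or_lt_of_le (hμ x) with h | h
  · simp [← h]
  · rw [if_pos h, Real.logb, mul_div_assoc, div_div_eq_mul_div, div_one]

lemma gibbs1 {β : Type*} [Fintype β] (c : β → ℝ) (hc : ∀ x, 0 ≤ c x) (m : ℝ) (hm : 0 < m)
    (hsum : ∑ x, c x = m) :
    0 ≤ ∑ x, (c x / m) * Real.log ((c x / m) * (Fintype.card β : ℝ)) := by
  have hβ : Nonempty β := by
    by_contra h
    rw [not_nonempty_iff] at h
    rw [Finset.univ_eq_empty, Finset.sum_empty] at hsum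
    exact hm.ne' hsum.symm
  have hn : 0 < (Fintype.card β : ℝ) := by exact_mod_cast Fintype.card_pos
  have key : ∀ x, -((c x / m) * Real.log ((c x / m) * (Fintype.card β : ℝ)))
      ≤ 1 / (Fintype.card β : ℝ) - c x / m := by
    intro x
    rcases eq_or_lt_of_le (hc x) with h | h
    · rw [← h]
      simp
    · have hp : (0:ℝ) < (c x / m) * (Fintype.card β : ℝ) := by positivity
      have h1 := Real.log_le_sub_one_of_pos (x := ((c x / m) * (Fintype.card β : ℝ))⁻¹)
        (by positivity)
      rw [Real.log_inv] at h1
      have h2 := mul_le_mul_of_nonneg_left h1 (div_pos h hm).le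
      have h3 : (c x / m) * (((c x / m) * (Fintype.card β : ℝ))⁻¹ - 1)
          = 1 / (Fintype.card β : ℝ) - c x / m := by
        field_simp
      rw [h3] at h2
      linarith [h2]
  have hs := Finset.sum_le_sum (fun x (_ : x ∈ Finset.univ) => key x)
  have hr : ∑ x : β, (1 / (Fintype.card β : ℝ) - c x / m) = 0 := by
    rw [Finset.sum_sub_distrib, Finset.sum_const, ← Finset.sum_div, hsum,
      div_self hm.ne', nsmul_eq_mul]
    rw [Finset.card_univ, mul_one_div, div_self hn.ne']
    ring
  rw [Finset.sum_neg_distrib, hr] at hs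
  linarith

lemma fiber_sum {α β : Type*} [Fintype β] (F : Finset α) (f : α → β) (g : β → ℝ) :
    ∑ x : β, ((F.filter (fun a => f a = x)).card : ℝ) * g x = ∑ a ∈ F, g (f a) := by
  rw [← Finset.sum_fiberwise F f (fun a => g (f a))]
  refine Finset.sum_congr rfl fun x _ => ?_
  have h : ∀ a ∈ F.filter (fun a => f a = x), g (f a) = g x := fun a ha => by
    rw [(Finset.mem_filter.1 ha).2]
  rw [Finset.sum_congr rfl h, Finset.sum_const, nsmul_eq_mul]

lemma keyB {k : ℕ} (Ω : Fin k → Type*) [∀ i, Fintype (Ω i)] [∀ i, Nonempty (Ω i)]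
    (F : Finset (∀ i, Ω i)) (hF : F.Nonempty) :
    ∑ i, ∑ x, (((F.filter (fun ω => ω i = x)).card : ℝ) / F.card) *
        Real.log ((((F.filter (fun ω => ω i = x)).card : ℝ) / F.card) * Fintype.card (Ω i))
      ≤ Real.log ((Fintype.card (∀ i, Ω i) : ℝ) / F.card) := by
  set m : ℝ := (F.card : ℝ) with hmdef
  have hm : 0 < m := by rw [hmdef]; exact_mod_cast Finset.card_pos.2 hF
  set c : ∀ i, Ω i → ℝ := fun i x => ((F.filter (fun ω => ω i = x)).card : ℝ) with hcdef
  have hc0 : ∀ i x, 0 ≤ c i x := fun i x => Nat.cast_nonneg _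
  have hcsum : ∀ i, ∑ x, c i x = m := by
    intro i
    have := fiber_sum F (fun ω => ω i) (fun _ => (1:ℝ))
    simpa using this
  have hcpos : ∀ ω ∈ F, ∀ i, 0 < c i (ω i) := by
    intro ω hω i
    have h1 : ω ∈ F.filter (fun ω' => ω' i = ω i) := Finset.mem_filter.2 ⟨hω, rfl⟩
    have h2 := Finset.card_pos.2 ⟨ω, h1⟩
    simp only [hcdef]
    exact_mod_cast h2
  set Q : (∀ i, Ω i) → ℝ := fun ω => ∏ i, c i (ω i) / m with hQdef
  have hQ0 : ∀ ω, 0 ≤ Q ω := fun ω => Finset.prod_nonneg fun i _ => div_nonneg (hc0 _ _) hm.le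
  have hQpos : ∀ ω ∈ F, 0 < Q ω := fun ω hω =>
    Finset.prod_pos fun i _ => div_pos (hcpos ω hω i) hm
  have hQsum : ∑ ω : ∀ i, Ω i, Q ω = 1 := by
    have := Finset.prod_univ_sum (fun i : Fin k => (Finset.univ : Finset (Ω i)))
      (fun i x => c i x / m)
    rw [Fintype.piFinset_univ] at this
    rw [hQdef, ← this]
    rw [Finset.prod_congr rfl (fun i _ => ?_)]
    · exact Finset.prod_const_one
    · rw [← Finset.sum_div, hcsum i, div_self hm.ne']
  set n : Fin k → ℝ := fun i => (Fintype.card (Ω i) : ℝ) with hndef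
  have hn : ∀ i, 0 < n i := fun i => by simp only [hndef]; exact_mod_cast Fintype.card_pos (α := Ω i)
  set N : ℝ := (Fintype.card (∀ i, Ω i) : ℝ) with hNdef
  have hNprod : N = ∏ i, n i := by
    rw [hNdef, Fintype.card_pi]; push_cast; rfl
  have hN : 0 < N := hNprod ▸ Finset.prod_pos fun i _ => hn i
  -- Gibbs
  have gibbs : 0 ≤ ∑ ω ∈ F, (1/m) * Real.log (1 / (m * Q ω)) := by
    have h1 : ∑ ω ∈ F, (1/m) * Real.log (m * Q ω) ≤ 0 := by
      have hle : ∀ ω ∈ F, (1/m) * Real.log (m * Q ω) ≤ (1/m) * (m * Q ω - 1) := by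
        intro ω hω
        exact mul_le_mul_of_nonneg_left
          (Real.log_le_sub_one_of_pos (mul_pos hm (hQpos ω hω)))
          (by positivity)
      calc ∑ ω ∈ F, (1/m) * Real.log (m * Q ω)
          ≤ ∑ ω ∈ F, (1/m) * (m * Q ω - 1) := Finset.sum_le_sum hle
        _ = ∑ ω ∈ F, (Q ω - 1/m) := by
            refine Finset.sum_congr rfl fun ω _ => ?_
            rw [mul_sub, mul_one, ← mul_assoc, one_div_mul_cancel hm.ne', one_mul]
        _ = ∑ ω ∈ F, Q ω - 1 := by
            rw [Finset.sum_sub_distrib, Finset.sum_const, nsmul_eq_mul, ← hmdef,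
              mul_one_div, div_self hm.ne']
        _ ≤ 0 := by
            have : ∑ ω ∈ F, Q ω ≤ ∑ ω : ∀ i, Ω i, Q ω :=
              Finset.sum_le_sum_of_subset_of_nonneg (Finset.subset_univ F)
                (fun ω _ _ => hQ0 ω)
            linarith [hQsum ▸ this]
    have : ∀ ω ∈ F, (1/m) * Real.log (1 / (m * Q ω)) = -((1/m) * Real.log (m * Q ω)) := by
      intro ω hω
      rw [Real.log_div one_ne_zero (mul_pos hm (hQpos ω hω)).ne', Real.log_one]
      ring
    rw [Finset.sum_congr rfl this, Finset.sum_neg_distrib]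
    linarith
  -- pointwise decomposition
  have point : ∀ ω ∈ F, Real.log (N / m) =
      Real.log (1 / (m * Q ω)) + ∑ i, Real.log (c i (ω i) / m * n i) := by
    intro ω hω
    have hq : Q ω ≠ 0 := (hQpos ω hω).ne'
    have hprod : ∏ i, (c i (ω i) / m * n i) = Q ω * N := by
      rw [Finset.prod_mul_distrib, hNprod]
    have hpos : ∀ i ∈ (Finset.univ : Finset (Fin k)), c i (ω i) / m * n i ≠ 0 :=
      fun i _ => (mul_pos (div_pos (hcpos ω hω i) hm) (hn i)).ne'
    have hcancel : 1 / (m * Q ω) * (Q ω * N) = N / m := by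
      rw [one_div, mul_inv, mul_assoc, ← mul_assoc ((Q ω)⁻¹), inv_mul_cancel₀ hq, one_mul,
        inv_mul_eq_div]
    rw [← hcancel,
      Real.log_mul (one_div_pos.2 (mul_pos hm (hQpos ω hω))).ne'
        ((mul_pos (hQpos ω hω) hN).ne'),
      ← hprod, Real.log_prod hpos]
  -- assemble
  have hsum : Real.log (N / m) = ∑ ω ∈ F, (1/m) * Real.log (N / m) := by
    rw [Finset.sum_const, nsmul_eq_mul, ← hmdef]
    field_simp
  calc ∑ i, ∑ x, (c i x / m) * Real.log (c i x / m * n i)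
      = ∑ i, ∑ ω ∈ F, (1/m) * Real.log (c i (ω i) / m * n i) := by
        refine Finset.sum_congr rfl fun i _ => ?_
        rw [← fiber_sum F (fun ω => ω i) (fun x => (1/m) * Real.log (c i x / m * n i))]
        refine Finset.sum_congr rfl fun x _ => ?_
        rw [hcdef]; ring
    _ = ∑ ω ∈ F, ∑ i, (1/m) * Real.log (c i (ω i) / m * n i) := Finset.sum_comm
    _ ≤ ∑ ω ∈ F, (1/m) * Real.log (1 / (m * Q ω)) +
          ∑ ω ∈ F, ∑ i, (1/m) * Real.log (c i (ω i) / m * n i) := by linarith [gibbs]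
    _ = ∑ ω ∈ F, (1/m) * (Real.log (1 / (m * Q ω)) + ∑ i, Real.log (c i (ω i) / m * n i)) := by
        rw [← Finset.sum_add_distrib]
        refine Finset.sum_congr rfl fun ω _ => ?_
        rw [mul_add, Finset.mul_sum]
    _ = ∑ ω ∈ F, (1/m) * Real.log (N / m) := by
        refine Finset.sum_congr rfl fun ω hω => ?_
        rw [← point ω hω]
    _ = Real.log (N / m) := hsum.symm

lemma arith_step (k s : ℕ) (hk : 1 ≤ k) (hs : 1 ≤ s) (θ : ℝ) (hθ0 : 0 < θ) (hθ1 : θ < 1)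
    (KLv : Fin k → ℝ) (m N : ℝ) (hm : 0 < m) (hN0 : 0 < N)
    (hKLnn : ∀ i, 0 ≤ KLv i)
    (hsumKL : ∑ i, KLv i ≤ Real.logb 2 (N / m))
    (hbad : ((Finset.univ.filter (fun i : Fin k =>
        KLv i ≤ 4 * s + 4 * k * Real.logb 2 (1/θ))).card : ℝ) ≤ 3 * (k:ℝ) / 4) :
    m / N ≤ (2:ℝ) ^ (-(s:ℝ)) * θ ^ k := by
  have hθinv : 1 < 1/θ := by rw [lt_div_iff₀ hθ0]; linarith
  have hLθ : 0 < Real.logb 2 (1/θ) := Real.logb_pos one_lt_two hθinv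
  set B : ℝ := 4 * s + 4 * k * Real.logb 2 (1/θ) with hBdef
  have hk1 : (1:ℝ) ≤ k := by exact_mod_cast hk
  have hs1 : (1:ℝ) ≤ s := by exact_mod_cast hs
  have hB0 : 0 < B := by
    rw [hBdef]
    have : 0 < 4 * (k:ℝ) * Real.logb 2 (1/θ) := by positivity
    nlinarith
  have hcardsplit : ((Finset.univ.filter (fun i : Fin k => KLv i ≤ B)).card : ℝ)
      + ((Finset.univ.filter (fun i : Fin k => ¬ (KLv i ≤ B))).card : ℝ) = k := by
    rw [← Nat.cast_add, Finset.card_filter_add_card_filter_not, Finset.card_univ,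
      Fintype.card_fin]
  set Lc := Finset.univ.filter (fun i : Fin k => ¬ (KLv i ≤ B)) with hLcdef
  have hLc : (k:ℝ)/4 ≤ (Lc.card : ℝ) := by linarith [hcardsplit, hbad]
  have hlower : (k:ℝ)/4 * B ≤ ∑ i, KLv i := by
    have h1 : ∑ i ∈ Lc, KLv i ≤ ∑ i, KLv i :=
      Finset.sum_le_sum_of_subset_of_nonneg (Finset.subset_univ _) (fun i _ _ => hKLnn i)
    have h2 : (Lc.card : ℝ) * B ≤ ∑ i ∈ Lc, KLv i := by
      have := Finset.card_nsmul_le_sum Lc KLv B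
        (fun i hi => (not_le.1 (Finset.mem_filter.1 hi).2).le)
      simpa [nsmul_eq_mul] using this
    have h3 : (k:ℝ)/4 * B ≤ (Lc.card : ℝ) * B := mul_le_mul_of_nonneg_right hLc hB0.le
    exact le_trans h3 (le_trans h2 h1)
  have hE : (s:ℝ) + k * Real.logb 2 (1/θ) ≤ Real.logb 2 (N / m) := by
    have e2 : (s:ℝ) ≤ (k:ℝ) * (s:ℝ) := by nlinarith
    have e1 : (k:ℝ) * Real.logb 2 (1/θ) ≤ (k:ℝ) * (k:ℝ) * Real.logb 2 (1/θ) := by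
      have h4 : (k:ℝ) ≤ (k:ℝ) * (k:ℝ) := by nlinarith
      exact mul_le_mul_of_nonneg_right h4 hLθ.le
    have hks : (s:ℝ) + (k:ℝ) * Real.logb 2 (1/θ) ≤ (k:ℝ)/4 * B := by
      rw [hBdef]; ring_nf; ring_nf at e1 e2 ⊢; nlinarith [e1, e2]
    linarith [hsumKL, hlower]
  have h2E : (2:ℝ) ^ ((s:ℝ) + k * Real.logb 2 (1/θ)) ≤ N / m := by
    have := Real.rpow_le_rpow_of_exponent_le one_le_two hE
    rwa [Real.rpow_logb two_pos (by norm_num) (div_pos hN0 hm)] at this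
  have hsplit : ((2:ℝ) ^ ((s:ℝ) + k * Real.logb 2 (1/θ)))⁻¹
      = (2:ℝ) ^ (-(s:ℝ)) * θ ^ k := by
    rw [← Real.rpow_neg (by norm_num : (0:ℝ) ≤ 2), neg_add, Real.rpow_add two_pos]
    congr 1
    rw [show -((k:ℝ) * Real.logb 2 (1/θ)) = Real.logb 2 (1/θ) * (-(k:ℝ)) by ring,
      Real.rpow_mul (by norm_num : (0:ℝ) ≤ 2),
      Real.rpow_logb two_pos (by norm_num) (by positivity),
      Real.rpow_neg (by positivity), Real.rpow_natCast]
    rw [one_div, inv_pow, inv_inv]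
  rw [← hsplit, show m / N = (N / m)⁻¹ by rw [inv_div]]
  exact inv_anti₀ (Real.rpow_pos_of_pos two_pos _) h2E

/-- Let `X` be uniform on `Ω₁ × ⋯ × Ω_k` and `Π` a function taking at
most `2^s` values.  With
`L(π) = {i : KL(law(X_i | Π = π) ‖ 𝒰_{Ω_i}) ≤ 4s + 4k·log₂(1/θ)}`, the probability
(over `π ∼ Π(X)`) that `|L(π)| ≤ 3k/4` is at most `θ^k`. -/
theorem stmt4 (k s : ℕ) (hk : 1 ≤ k) (hs : 1 ≤ s)
    (θ : ℝ) (hθ0 : 0 < θ) (hθ1 : θ < 1)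
    (Ω : Fin k → Type*) [∀ i, Fintype (Ω i)] [∀ i, Nonempty (Ω i)]
    (T : Type*) [Fintype T] (hT : Fintype.card T ≤ 2 ^ s)
    (Prot : (∀ i, Ω i) → T) :
    ∑ π : T,
      (((Finset.univ.filter (fun ω : ∀ j, Ω j => Prot ω = π)).card : ℝ)
          / (Fintype.card (∀ j, Ω j) : ℝ)) *
        (if (((Finset.univ.filter (fun i : Fin k =>
                KL (condMarg Prot π i) (unif (Ω i))
                  ≤ 4 * s + 4 * k * Real.logb 2 (1/θ))).card : ℝ) ≤ 3 * (k : ℝ) / 4)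
          then 1 else 0)
      ≤ θ ^ k := by
  have hN0 : 0 < (Fintype.card (∀ j, Ω j) : ℝ) := by exact_mod_cast Fintype.card_pos
  have hlog2 : 0 < Real.log 2 := Real.log_pos one_lt_two
  have htrans : ∑ π : T, ((2:ℝ) ^ (-(s:ℝ)) * θ ^ k) ≤ θ ^ k := by
    rw [Finset.sum_const, nsmul_eq_mul, Finset.card_univ]
    have h1 : (Fintype.card T : ℝ) ≤ (2:ℝ) ^ (s:ℕ) := by exact_mod_cast hT
    have h2 : (0:ℝ) < (2:ℝ) ^ (-(s:ℝ)) * θ ^ k := by positivity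
    calc (Fintype.card T : ℝ) * ((2:ℝ) ^ (-(s:ℝ)) * θ ^ k)
        ≤ (2:ℝ) ^ (s:ℕ) * ((2:ℝ) ^ (-(s:ℝ)) * θ ^ k) := by
          exact mul_le_mul_of_nonneg_right h1 h2.le
      _ = θ ^ k := by
          rw [← Real.rpow_natCast 2 s, ← mul_assoc, ← Real.rpow_add two_pos]
          simp
  refine le_trans (Finset.sum_le_sum (g := fun _ : T => (2:ℝ) ^ (-(s:ℝ)) * θ ^ k)
    fun π _ => ?_) htrans
  by_cases hbad : (((Finset.univ.filter (fun i : Fin k =>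
      KL (condMarg Prot π i) (unif (Ω i))
        ≤ 4 * s + 4 * k * Real.logb 2 (1/θ))).card : ℝ) ≤ 3 * (k : ℝ) / 4)
  swap
  · rw [if_neg hbad, mul_zero]; positivity
  rw [if_pos hbad, mul_one]
  set F := Finset.univ.filter (fun ω : ∀ j, Ω j => Prot ω = π) with hF
  rcases Finset.eq_empty_or_nonempty F with hFe | hFne
  · rw [hFe]
    simp only [Finset.card_empty, Nat.cast_zero, zero_div]
    positivity
  have hm : 0 < (F.card : ℝ) := by exact_mod_cast Finset.card_pos.2 hFne
  have hcm : ∀ i : Fin k, condMarg Prot π i =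
      fun x => ((F.filter (fun ω => ω i = x)).card : ℝ) / (F.card : ℝ) := by
    intro i; funext x
    unfold condMarg
    rw [← Finset.filter_filter, ← hF]
  have hKL : ∀ i, KL (condMarg Prot π i) (unif (Ω i)) =
      (∑ x, (((F.filter (fun ω => ω i = x)).card : ℝ) / F.card) *
        Real.log ((((F.filter (fun ω => ω i = x)).card : ℝ) / F.card) *
          (Fintype.card (Ω i) : ℝ))) / Real.log 2 := by
    intro i
    rw [hcm i, KL_eq_sum _ (fun x => by positivity)]
  have hcsum : ∀ i, ∑ x, ((F.filter (fun ω => ω i = x)).card : ℝ) = (F.card : ℝ) := by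
    intro i
    have := fiber_sum F (fun ω => ω i) (fun _ => (1:ℝ))
    simpa using this
  have hKLnn : ∀ i, 0 ≤ KL (condMarg Prot π i) (unif (Ω i)) := by
    intro i
    rw [hKL i]
    exact div_nonneg (gibbs1 _ (fun x => Nat.cast_nonneg _) _ hm (hcsum i)) hlog2.le
  have hsumKL : ∑ i, KL (condMarg Prot π i) (unif (Ω i))
      ≤ Real.logb 2 ((Fintype.card (∀ j, Ω j) : ℝ) / F.card) := by
    have hB := keyB Ω F hFne
    rw [Real.logb, Finset.sum_congr rfl (fun i _ => hKL i), ← Finset.sum_div]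
    gcongr
  exact arith_step k s hk hs θ hθ0 hθ1
    (fun i => KL (condMarg Prot π i) (unif (Ω i)))
    (F.card : ℝ) (Fintype.card (∀ j, Ω j) : ℝ) hm hN0 hKLnn hsumKL hbad
end

section
/- Let Ω be a finite set with |Ω| = N and let μ be a probability distribution on Ω with KL(μ ‖ 𝒰_Ω) ≤ θ, where 0 < θ ≤ 1/100. Let B := { x ∈ Ω : μ(x) ≤ 2/N }; then μ(B) ≥ 1 − √(8θ) > 0, and the conditional distribution μ_B, defined by μ_B(x) = μ(x)/μ(B) for x ∈ B and μ_B(x) = 0 for x ∉ B, satisfies ‖μ_B − 𝒰_Ω‖₂² = ∑_{x∈Ω} (μ_B(x) − 1/N)² ≤ 20·√θ / N. -/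
open scoped Classical
open Finset

private lemma stmt8L1 (t : ℝ) (ht0 : 0 ≤ t) (ht2 : t ≤ 2) :
    (t - 1)^2 / 6 ≤ t * Real.log t - t + 1 := by
  rcases eq_or_lt_of_le ht0 with h | h
  · simp [← h]; norm_num
  · set s := Real.sqrt t with hs
    have hs0 : 0 < s := Real.sqrt_pos.mpr h
    have hs2 : s^2 = t := Real.sq_sqrt ht0
    have hlog : Real.log t = 2 * Real.log s := by
      rw [← hs2, Real.log_pow]; push_cast; ring
    have h1 : Real.log s⁻¹ ≤ s⁻¹ - 1 := Real.log_le_sub_one_of_pos (by positivity)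
    rw [Real.log_inv] at h1
    have h2 : s - 1 ≤ s * Real.log s := by
      have h3 : s * (-Real.log s) ≤ s * (s⁻¹ - 1) :=
        mul_le_mul_of_nonneg_left h1 hs0.le
      have h4 : s * s⁻¹ = 1 := mul_inv_cancel₀ hs0.ne'
      nlinarith
    have hsle : s ≤ 1.42 := by nlinarith
    have hlb : (s - 1)^2 ≤ t * Real.log t - t + 1 := by
      have h5 : 2*s*(s-1) ≤ 2*s*(s * Real.log s) := by nlinarith
      have h7 : t * Real.log t = 2*s*(s*Real.log s) := by rw [hlog, ← hs2]; ring
      nlinarith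
    have hkey : (t - 1)^2 ≤ 6 * (s - 1)^2 := by
      have h6 : 0 ≤ (s-1)^2 * (6 - (s+1)^2) := by
        apply mul_nonneg (sq_nonneg _); nlinarith
      nlinarith
    linarith

private lemma stmt8L2 (t : ℝ) (ht : 2 ≤ t) :
    t * Real.log 2 - 1 ≤ t * Real.log t - t + 1 := by
  have ht0 : 0 < t := by linarith
  have h1 : Real.log (2 / t) ≤ 2 / t - 1 := Real.log_le_sub_one_of_pos (by positivity)
  have h2 : Real.log (2 / t) = Real.log 2 - Real.log t := Real.log_div (by norm_num) ht0.ne'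
  have h3 : t * (2 / t) = 2 := by field_simp
  nlinarith [mul_le_mul_of_nonneg_left h1 ht0.le]

set_option maxHeartbeats 2000000 in
/-- Let `|Ω| = N`, `KL(μ ‖ 𝒰_Ω) ≤ θ` with `0 < θ ≤ 1/100`, and
`B = {x : μ(x) ≤ 2/N}`.  Then `μ(B) ≥ 1 − √(8θ) > 0` and the conditional distribution
`μ_B` satisfies `‖μ_B − 𝒰_Ω‖₂² ≤ 20·√θ/N`. -/
theorem stmt8 (Ω : Type*) [Fintype Ω] [Nonempty Ω]
    (μ : Ω → ℝ) (hμ0 : ∀ x, 0 ≤ μ x) (hμ1 : ∑ x, μ x = 1)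
    (θ : ℝ) (hθ0 : 0 < θ) (hθ1 : θ ≤ 1/100) (hKL : KL μ (unif Ω) ≤ θ) :
    (1 - Real.sqrt (8 * θ)
        ≤ ∑ x ∈ Finset.univ.filter (fun x => μ x ≤ 2 / (Fintype.card Ω : ℝ)), μ x) ∧
    (0 < 1 - Real.sqrt (8 * θ)) ∧
    ∑ x, ((if μ x ≤ 2 / (Fintype.card Ω : ℝ)
            then μ x / (∑ y ∈ Finset.univ.filter (fun y => μ y ≤ 2 / (Fintype.card Ω : ℝ)), μ y)
            else 0) - 1 / (Fintype.card Ω : ℝ)) ^ 2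
      ≤ 20 * Real.sqrt θ / (Fintype.card Ω : ℝ) := by
  classical
  have hlog2 : 0 < Real.log 2 := Real.log_pos (by norm_num)
  set N : ℝ := (Fintype.card Ω : ℝ) with hNdef
  have hN : 0 < N := by
    rw [hNdef]; exact_mod_cast Fintype.card_pos
  set B := Finset.univ.filter (fun x => μ x ≤ 2 / N) with hBdef
  set m := ∑ x ∈ B, μ x with hmdef
  set g : Ω → ℝ := fun x => μ x * Real.log (μ x * N) - μ x + 1/N with hgdef
  -- g x as f(t)/N
  have hgt : ∀ x, g x = (1/N) * ((μ x * N) * Real.log (μ x * N) - (μ x * N) + 1) := by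
    intro x
    simp only [hgdef]
    field_simp
  -- sum of g equals log 2 * KL
  have hKL' : Real.log 2 * KL μ (unif Ω) = ∑ x, μ x * Real.log (μ x * N) := by
    rw [KL, Finset.mul_sum]
    apply Finset.sum_congr rfl
    intro x _
    split_ifs with h
    · have hd : μ x / unif Ω x = μ x * N := by
        simp only [unif, ← hNdef]
        field_simp
      rw [Real.logb, hd]
      have hl : Real.log 2 ≠ 0 := ne_of_gt hlog2
      field_simp
    · have h0 : μ x = 0 := le_antisymm (not_lt.mp h) (hμ0 x)
      simp [h0]
  have hsum_g : ∑ x, g x = Real.log 2 * KL μ (unif Ω) := by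
    rw [hKL']
    simp only [hgdef]
    rw [Finset.sum_add_distrib, Finset.sum_sub_distrib, hμ1, Finset.sum_const,
      Finset.card_univ, nsmul_eq_mul]
    have : (Fintype.card Ω : ℝ) * (1/N) = 1 := by
      rw [← hNdef]; field_simp
    rw [this]
    ring
  set G := ∑ x, g x with hGdef
  have hG : G ≤ Real.log 2 * θ := by
    rw [hsum_g]
    exact mul_le_mul_of_nonneg_left hKL hlog2.le
  have hG7 : G ≤ 0.7 * θ := by
    nlinarith [Real.log_two_lt_d9, hθ0]
  -- nonnegativity of g
  have hfnn : ∀ t : ℝ, 0 ≤ t → 0 ≤ t * Real.log t - t + 1 := by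
    intro t ht
    rcases le_or_gt t 2 with h | h
    · nlinarith [stmt8L1 t ht h, sq_nonneg (t-1)]
    · nlinarith [stmt8L2 t h.le, Real.log_two_gt_d9]
  have hg0 : ∀ x, 0 ≤ g x := by
    intro x
    rw [hgt x]
    have := hfnn (μ x * N) (mul_nonneg (hμ0 x) hN.le)
    positivity
  have hG0 : 0 ≤ G := Finset.sum_nonneg fun x _ => hg0 x
  -- pointwise bound on B
  have hA : ∀ x, μ x ≤ 2 / N → (μ x - 1/N)^2 ≤ 6 * g x / N := by
    intro x hx
    have ht0 : 0 ≤ μ x * N := mul_nonneg (hμ0 x) hN.le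
    have ht2 : μ x * N ≤ 2 := (le_div_iff₀ hN).mp hx
    have h1 := stmt8L1 (μ x * N) ht0 ht2
    have e1 : (μ x - 1/N)^2 = (μ x * N - 1)^2 / N^2 := by
      field_simp
    have e2 : 6 * g x / N
        = 6 * ((μ x * N) * Real.log (μ x * N) - (μ x * N) + 1) / N^2 := by
      rw [hgt x]; ring
    rw [e1, e2]
    apply div_le_div_of_nonneg_right ?_ (by positivity)
    linarith
  -- pointwise bound off B
  have hC : ∀ x, ¬(μ x ≤ 2 / N) → (Real.log 2 - 1/2) * μ x ≤ g x := by
    intro x hx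
    have ht : 2 < μ x * N := (div_lt_iff₀ hN).mp (not_le.mp hx)
    have h2 := stmt8L2 (μ x * N) ht.le
    have h3 : (1/N) * ((μ x * N) * Real.log 2 - 1)
        ≤ (1/N) * ((μ x * N) * Real.log (μ x * N) - (μ x * N) + 1) :=
      mul_le_mul_of_nonneg_left h2 (by positivity)
    rw [← hgt x] at h3
    have e3 : (1/N) * ((μ x * N) * Real.log 2 - 1) = μ x * Real.log 2 - 1/N := by
      field_simp
    rw [e3] at h3
    have h4 : 1/N < μ x / 2 := by
      rw [div_lt_div_iff₀ hN (by norm_num)]; linarith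
    linarith
  -- epsilon
  set ε := ∑ x ∈ Finset.univ.filter (fun x => ¬(μ x ≤ 2 / N)), μ x with hεdef
  have hsplit : m + ε = 1 := by
    rw [hmdef, hεdef, hBdef]
    rw [Finset.sum_filter_add_sum_filter_not]
    exact hμ1
  have hε0 : 0 ≤ ε :=
    Finset.sum_nonneg fun x _ => hμ0 x
  have hεS : (Real.log 2 - 1/2) * ε ≤ G := by
    rw [hεdef, Finset.mul_sum, hGdef]
    refine le_trans (Finset.sum_le_sum ?_)
      (Finset.sum_le_sum_of_subset_of_nonneg (Finset.filter_subset _ _)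
        (fun i _ _ => hg0 i))
    intro i hi
    exact hC i (Finset.mem_filter.mp hi).2
  have hε36 : ε ≤ 3.6 * θ := by
    nlinarith [Real.log_two_gt_d9, Real.log_two_lt_d9, hε0, hθ0.le]
  clear hKL hKL' hsum_g hεS hG
  clear_value ε G g m B N
  have hm1 : m ≤ 1 := by linarith
  have hm96 : 0.96 ≤ m := by nlinarith
  have hmpos : 0 < m := by linarith
  -- sqrt facts
  have hsθ0 : 0 ≤ Real.sqrt θ := Real.sqrt_nonneg θ
  have hsθ : Real.sqrt θ ≤ 1/10 := by
    have : Real.sqrt θ ≤ Real.sqrt (1/100) := Real.sqrt_le_sqrt hθ1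
    rwa [show (1/100 : ℝ) = (1/10)^2 by norm_num, Real.sqrt_sq (by norm_num)] at this
  have hθs : θ ≤ Real.sqrt θ / 10 := by
    nlinarith [Real.mul_self_sqrt hθ0.le]
  have hsqrt8 : Real.sqrt (8 * θ) = Real.sqrt 8 * Real.sqrt θ :=
    Real.sqrt_mul (by norm_num) θ
  have h8ge2 : (2:ℝ) ≤ Real.sqrt 8 := by
    nlinarith [Real.sq_sqrt (show (0:ℝ) ≤ 8 by norm_num), Real.sqrt_nonneg 8]
  -- claim 1
  have claim1 : 1 - Real.sqrt (8 * θ) ≤ m := by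
    have : ε ≤ Real.sqrt (8 * θ) := by
      rw [hsqrt8]
      nlinarith [mul_nonneg (show (0:ℝ) ≤ Real.sqrt 8 - 2 by linarith) hsθ0]
    linarith
  -- claim 2
  have claim2 : 0 < 1 - Real.sqrt (8 * θ) := by
    have h1 : Real.sqrt (8*θ) < 1 := by
      nlinarith [Real.sq_sqrt (show (0:ℝ) ≤ 8*θ by positivity), Real.sqrt_nonneg (8*θ)]
    linarith
  refine ⟨claim1, claim2, ?_⟩
  -- claim 3
  set w := ε / m with hwdef
  have hw0 : 0 ≤ w := by positivity
  have hw : w ≤ 3.8 * θ := by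
    rw [hwdef, div_le_iff₀ hmpos]
    nlinarith
  rw [← Finset.sum_filter_add_sum_filter_not Finset.univ (fun x => μ x ≤ 2 / N)]
  have e1 : ∑ x ∈ Finset.univ.filter (fun x => μ x ≤ 2 / N),
      ((if μ x ≤ 2 / N then μ x / m else 0) - 1/N)^2
      = ∑ x ∈ B, (μ x / m - 1/N)^2 := by
    rw [← hBdef]
    refine Finset.sum_congr rfl fun x hx => ?_
    rw [hBdef] at hx
    rw [if_pos ((Finset.mem_filter.mp hx).2)]
  have e2 : ∑ x ∈ Finset.univ.filter (fun x => ¬(μ x ≤ 2 / N)),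
      ((if μ x ≤ 2 / N then μ x / m else 0) - 1/N)^2
      = ∑ x ∈ Finset.univ.filter (fun x => ¬(μ x ≤ 2 / N)), ((0:ℝ) - 1/N)^2 := by
    exact Finset.sum_congr rfl fun x hx => by
      rw [if_neg ((Finset.mem_filter.mp hx).2)]
  rw [e1, e2]
  -- bound T1
  have hT1pt : ∀ x ∈ B, (μ x / m - 1/N)^2 ≤ (12 * g x + 4 * w^2 * μ x) / N := by
    intro x hx
    have hxB : μ x ≤ 2 / N := by
      rw [hBdef] at hx; exact (Finset.mem_filter.mp hx).2
    have hdec : μ x / m - 1/N = (μ x - 1/N) + μ x * w := by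
      have hε' : ε = 1 - m := by linarith
      rw [hwdef, hε']
      field_simp
      ring
    have hsq : ((μ x - 1/N) + μ x * w)^2 ≤ 2*(μ x - 1/N)^2 + 2*(μ x * w)^2 := by
      nlinarith [sq_nonneg ((μ x - 1/N) - μ x * w)]
    have h2a := hA x hxB
    have hμ2 : μ x ^ 2 ≤ (2/N) * μ x := by
      nlinarith [hμ0 x]
    have hd : 2*(μ x * w)^2 ≤ 2 * w^2 * ((2/N) * μ x) := by
      nlinarith [mul_le_mul_of_nonneg_left hμ2 (show (0:ℝ) ≤ 2 * w^2 by positivity)]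
    have hf : (12 * g x + 4 * w^2 * μ x) / N
        = 2 * (6 * g x / N) + 2 * w^2 * ((2/N) * μ x) := by
      field_simp; ring
    rw [hdec, hf]
    linarith
  have hT1 : ∑ x ∈ B, (μ x / m - 1/N)^2 ≤ (12 * (∑ x ∈ B, g x) + 4 * w^2 * m) / N := by
    refine le_trans (Finset.sum_le_sum hT1pt) (le_of_eq ?_)
    rw [← Finset.sum_div, Finset.sum_add_distrib, ← Finset.mul_sum, ← Finset.mul_sum, hmdef]
  have hSB : ∑ x ∈ B, g x ≤ G := by
    rw [hGdef]
    exact Finset.sum_le_sum_of_subset_of_nonneg (Finset.subset_univ _)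
      (fun i _ _ => hg0 i)
  -- bound T2
  have hT2 : ∑ x ∈ Finset.univ.filter (fun x => ¬(μ x ≤ 2 / N)), ((0:ℝ) - 1/N)^2
      ≤ (ε/2) / N := by
    have hpt : ∀ x ∈ Finset.univ.filter (fun x => ¬(μ x ≤ 2 / N)),
        ((0:ℝ) - 1/N)^2 ≤ (μ x / 2) / N := by
      intro x hx
      have hxc : ¬(μ x ≤ 2 / N) := (Finset.mem_filter.mp hx).2
      have ht : 2 < μ x * N := (div_lt_iff₀ hN).mp (not_le.mp hxc)
      have h4 : 1/N < μ x / 2 := by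
        rw [div_lt_div_iff₀ hN (by norm_num)]; linarith
      have e : ((0:ℝ) - 1/N)^2 = (1/N) * (1/N) := by ring
      have e' : (μ x / 2) / N = (μ x / 2) * (1/N) := by ring
      rw [e, e']
      exact mul_le_mul_of_nonneg_right h4.le (by positivity)
    refine le_trans (Finset.sum_le_sum hpt) (le_of_eq ?_)
    rw [← Finset.sum_div, ← Finset.sum_div, hεdef]
  -- final numeric
  have hfinal : 12 * G + 4 * w^2 + ε/2 ≤ 20 * Real.sqrt θ := by
    nlinarith [mul_nonneg (show (0:ℝ) ≤ 3.8*θ - w by linarith) (show (0:ℝ) ≤ 3.8*θ + w by linarith),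
      mul_le_mul_of_nonneg_right hθ1 hθ0.le]
  calc ∑ x ∈ B, (μ x / m - 1/N)^2
        + ∑ x ∈ Finset.univ.filter (fun x => ¬(μ x ≤ 2 / N)), ((0:ℝ) - 1/N)^2
      ≤ (12 * (∑ x ∈ B, g x) + 4 * w^2 * m) / N + (ε/2) / N := add_le_add hT1 hT2
    _ = (12 * (∑ x ∈ B, g x) + 4 * w^2 * m + ε/2) / N := by rw [← add_div]
    _ ≤ (20 * Real.sqrt θ) / N := by
        apply div_le_div_of_nonneg_right ?_ hN.le
        nlinarith [sq_nonneg w]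
    _ = 20 * Real.sqrt θ / N := by ring
end

section
/- Let b ≥ 2 and g ≥ 1 be integers and ε₁,…,ε_g ∈ [0,1]. For each i ∈ [g] define the probability distribution ν_i on S_b by ν_i(σ) = (1 + √ε_i)/b! if σ is an even permutation and ν_i(σ) = (1 − √ε_i)/b! if σ is odd. Let ν := ν₁∘ν₂∘⋯∘ν_g be the distribution of the composition of independent samples σ_i ∼ ν_i. Then ν(σ) = (1 + √(∏_{i=1}^g ε_i))/b! for every even σ and ν(σ) = (1 − √(∏_{i=1}^g ε_i))/b! for every odd σ; consequently ‖ν − 𝒰_{S_b}‖₂² = (∏_{i=1}^g ε_i)/b!, so the upper bound of the concatenation lemma is attained with equality. -/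
open scoped Classical
open Finset

/-- The distribution of the composition `σ₁∘σ₂∘⋯∘σ_g` of independent samples
`σ_i ∼ ν_i` of permutations of `[b]` (composition: `(σ∘τ)(x) = σ(τ(x))`). -/
noncomputable def convol {b g : ℕ} (ν : Fin g → Equiv.Perm (Fin b) → ℝ) :
    Equiv.Perm (Fin b) → ℝ :=
  fun σ => ∑ τ : Fin g → Equiv.Perm (Fin b),
    if (List.ofFn τ).prod = σ then ∏ i, ν i (τ i) else 0

noncomputable def sgn {b : ℕ} (σ : Equiv.Perm (Fin b)) : ℝ :=
  ((Equiv.Perm.sign σ : ℤ) : ℝ)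

lemma sgn_mul {b : ℕ} (π ρ : Equiv.Perm (Fin b)) : sgn (π * ρ) = sgn π * sgn ρ := by
  simp [sgn]

lemma sgn_inv {b : ℕ} (π : Equiv.Perm (Fin b)) : sgn π⁻¹ = sgn π := by
  simp [sgn]

lemma sgn_sq {b : ℕ} (π : Equiv.Perm (Fin b)) : sgn π * sgn π = 1 := by
  rcases Int.units_eq_one_or (Equiv.Perm.sign π) with h | h <;> simp [sgn, h]

lemma sum_sgn {b : ℕ} (hb : 2 ≤ b) : ∑ π : Equiv.Perm (Fin b), sgn π = 0 := by
  have h01 : (⟨0, by omega⟩ : Fin b) ≠ ⟨1, by omega⟩ := by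
    simp [Fin.ext_iff]
  set s : Equiv.Perm (Fin b) := Equiv.swap ⟨0, by omega⟩ ⟨1, by omega⟩ with hs
  have key : ∑ π : Equiv.Perm (Fin b), sgn π = ∑ π : Equiv.Perm (Fin b), sgn (s * π) :=
    (Fintype.sum_bijective (fun π => s * π) (Group.mulLeft_bijective s) _ _ (fun π => rfl)).symm
  have h2 : ∀ π : Equiv.Perm (Fin b), sgn (s * π) = - sgn π := by
    intro π
    rw [sgn_mul]
    have : sgn s = -1 := by simp [sgn, hs, Equiv.Perm.sign_swap h01]
    rw [this]; ring
  simp only [h2, Finset.sum_neg_distrib] at key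
  linarith

lemma convol_zero {b : ℕ} (ν : Fin 0 → Equiv.Perm (Fin b) → ℝ) (σ : Equiv.Perm (Fin b)) :
    convol ν σ = if σ = 1 then 1 else 0 := by
  simp [convol, List.ofFn_zero, eq_comm]

lemma convol_succ {b g : ℕ} (ν : Fin (g+1) → Equiv.Perm (Fin b) → ℝ) (σ : Equiv.Perm (Fin b)) :
    convol ν σ = ∑ π : Equiv.Perm (Fin b),
      ν 0 π * convol (fun i => ν i.succ) (π⁻¹ * σ) := by
  unfold convol
  rw [← (Fin.consEquiv (fun _ : Fin (g+1) => Equiv.Perm (Fin b))).sum_comp]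
  rw [Fintype.sum_prod_type]
  refine Finset.sum_congr rfl fun π _ => ?_
  rw [Finset.mul_sum]
  refine Finset.sum_congr rfl fun ρ _ => ?_
  simp only [Fin.consEquiv_apply, List.ofFn_succ, List.prod_cons, Fin.cons_zero,
    Fin.cons_succ, Fin.prod_univ_succ, ← eq_inv_mul_iff_mul_eq, mul_ite, mul_zero]

lemma key {b : ℕ} (hb : 2 ≤ b) : ∀ (g : ℕ) (a : Fin (g+1) → ℝ) (σ : Equiv.Perm (Fin b)),
    convol (fun i σ' => (1 + a i * sgn σ') / (Nat.factorial b : ℝ)) σ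
      = (1 + (∏ i, a i) * sgn σ) / (Nat.factorial b : ℝ) := by
  have hN : (Nat.factorial b : ℝ) ≠ 0 := Nat.cast_ne_zero.2 (Nat.factorial_ne_zero b)
  intro g
  induction g with
  | zero =>
    intro a σ
    rw [convol_succ]
    simp only [convol_zero, inv_mul_eq_one, mul_ite, mul_one, mul_zero,
      Finset.sum_ite_eq', Finset.mem_univ, if_true]
    simp
  | succ g ih =>
    intro a σ
    rw [convol_succ]
    have hrw : ∀ π : Equiv.Perm (Fin b),
        convol (fun (i : Fin (g+1)) (σ' : Equiv.Perm (Fin b)) =>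
            (1 + a i.succ * sgn σ') / (Nat.factorial b : ℝ)) (π⁻¹ * σ)
        = (1 + (∏ i : Fin (g+1), a i.succ) * (sgn π * sgn σ)) / (Nat.factorial b : ℝ) := by
      intro π
      rw [ih (fun i => a i.succ) (π⁻¹ * σ), sgn_mul, sgn_inv]
    simp only [hrw]
    set A := ∏ i : Fin (g+1), a i.succ with hA
    set t := sgn σ with ht
    have point : ∀ π : Equiv.Perm (Fin b),
        (1 + a 0 * sgn π) / (Nat.factorial b : ℝ) *
          ((1 + A * (sgn π * t)) / (Nat.factorial b : ℝ))
        = ((1 + a 0 * A * t) + (a 0 + A * t) * sgn π)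
            / ((Nat.factorial b : ℝ) * (Nat.factorial b : ℝ)) := by
      intro π
      rw [div_mul_div_comm]
      congr 1
      linear_combination (a 0 * A * t) * sgn_sq π
    simp only [point]
    rw [← Finset.sum_div, Finset.sum_add_distrib, ← Finset.mul_sum, sum_sgn hb, mul_zero,
      add_zero, Finset.sum_const, Finset.card_univ, Fintype.card_perm, Fintype.card_fin,
      nsmul_eq_mul, mul_div_mul_left _ _ hN, Fin.prod_univ_succ]


/-- tightness of the concatenation lemma.  With
`ν_i(σ) = (1 ± √ε_i)/b!` according to the sign of `σ`, the composed distribution is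
`ν(σ) = (1 ± √(∏ε_i))/b!` according to the sign of `σ`, and consequently
`‖ν − 𝒰_{S_b}‖₂² = (∏ ε_i)/b!`. -/
theorem stmt10 (b g : ℕ) (hb : 2 ≤ b) (hg : 1 ≤ g)
    (ε : Fin g → ℝ) (hε : ∀ i, 0 ≤ ε i ∧ ε i ≤ 1) :
    (∀ σ : Equiv.Perm (Fin b),
      convol (fun i σ' =>
          if Equiv.Perm.sign σ' = 1 then (1 + Real.sqrt (ε i)) / (Nat.factorial b : ℝ)
          else (1 - Real.sqrt (ε i)) / (Nat.factorial b : ℝ)) σ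
        = if Equiv.Perm.sign σ = 1 then (1 + Real.sqrt (∏ i, ε i)) / (Nat.factorial b : ℝ)
          else (1 - Real.sqrt (∏ i, ε i)) / (Nat.factorial b : ℝ)) ∧
    (∑ σ : Equiv.Perm (Fin b),
      (convol (fun i σ' =>
          if Equiv.Perm.sign σ' = 1 then (1 + Real.sqrt (ε i)) / (Nat.factorial b : ℝ)
          else (1 - Real.sqrt (ε i)) / (Nat.factorial b : ℝ)) σ
        - 1 / (Nat.factorial b : ℝ)) ^ 2
      = (∏ i, ε i) / (Nat.factorial b : ℝ)) := by
  have hN : (Nat.factorial b : ℝ) ≠ 0 := Nat.cast_ne_zero.2 (Nat.factorial_ne_zero b)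
  obtain ⟨g', rfl⟩ : ∃ g', g = g' + 1 := ⟨g - 1, by omega⟩
  set a : Fin (g' + 1) → ℝ := fun i => Real.sqrt (ε i) with ha
  have hεnn : 0 ≤ ∏ i, ε i := Finset.prod_nonneg fun i _ => (hε i).1
  have hP : ∏ i, a i = Real.sqrt (∏ i, ε i) := by
    have h1 : ∏ i, ε i = (∏ i, a i) ^ 2 := by
      rw [← Finset.prod_pow]
      exact Finset.prod_congr rfl fun i _ => (Real.sq_sqrt (hε i).1).symm
    rw [h1, Real.sqrt_sq (Finset.prod_nonneg fun i _ => Real.sqrt_nonneg _)]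
  have hν : (fun (i : Fin (g'+1)) (σ' : Equiv.Perm (Fin b)) =>
        if Equiv.Perm.sign σ' = 1 then (1 + Real.sqrt (ε i)) / (Nat.factorial b : ℝ)
        else (1 - Real.sqrt (ε i)) / (Nat.factorial b : ℝ))
      = fun i σ' => (1 + a i * sgn σ') / (Nat.factorial b : ℝ) := by
    funext i σ'
    rcases Int.units_eq_one_or (Equiv.Perm.sign σ') with h | h
    · simp [h, sgn, ha]
    · rw [h]
      simp only [sgn, h, ha]
      norm_num
      ring_nf
  have part1 : ∀ σ : Equiv.Perm (Fin b),
      convol (fun i σ' =>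
          if Equiv.Perm.sign σ' = 1 then (1 + Real.sqrt (ε i)) / (Nat.factorial b : ℝ)
          else (1 - Real.sqrt (ε i)) / (Nat.factorial b : ℝ)) σ
        = if Equiv.Perm.sign σ = 1 then (1 + Real.sqrt (∏ i, ε i)) / (Nat.factorial b : ℝ)
          else (1 - Real.sqrt (∏ i, ε i)) / (Nat.factorial b : ℝ) := by
    intro σ
    rw [hν, key hb g' a σ, hP]
    rcases Int.units_eq_one_or (Equiv.Perm.sign σ) with h | h
    · simp [h, sgn]
    · rw [h]
      simp only [sgn, h]
      norm_num
      ring_nf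
  refine ⟨part1, ?_⟩
  have hsum : ∀ σ : Equiv.Perm (Fin b),
      (convol (fun i σ' =>
          if Equiv.Perm.sign σ' = 1 then (1 + Real.sqrt (ε i)) / (Nat.factorial b : ℝ)
          else (1 - Real.sqrt (ε i)) / (Nat.factorial b : ℝ)) σ
        - 1 / (Nat.factorial b : ℝ)) ^ 2
      = (∏ i, ε i) / ((Nat.factorial b : ℝ) * (Nat.factorial b : ℝ)) := by
    intro σ
    rw [part1 σ]
    have hs := Real.sq_sqrt hεnn
    rcases Int.units_eq_one_or (Equiv.Perm.sign σ) with h | h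
    · rw [if_pos h, div_sub_div_same,
        show (1 + Real.sqrt (∏ i, ε i) - 1) = Real.sqrt (∏ i, ε i) by ring,
        div_pow, hs, sq]
    · rw [if_neg (by rw [h]; decide), div_sub_div_same,
        show (1 - Real.sqrt (∏ i, ε i) - 1) = -Real.sqrt (∏ i, ε i) by ring,
        div_pow, neg_sq, hs, sq]
  simp only [hsum]
  rw [Finset.sum_const, Finset.card_univ, Fintype.card_perm, Fintype.card_fin,
    nsmul_eq_mul]
  field_simp
end

section
/- Let r, t, b ≥ 1 be integers with r even, let G_rs be a bipartite (r,t)-RS graph with parts identified with [n^rs], let Σ = (σ_{i,j}) ∈ (S_b)^{t×r}, let ℓ ∈ [t], and let E* = (e₁,…,e_{r/2}) be a tuple of r/2 distinct edges of the induced matching M_ℓ. Set m := (r/2)·b and define ρ ∈ S_m by ρ((i−1)·b + a) := (i−1)·b + σ_{ℓ,e_i}(a) for all i ∈ [r/2] and a ∈ [b], where σ_{ℓ,e_i} denotes the entry of Σ at row ℓ and the column indexing edge e_i in M_ℓ. Then the layered graph Block(G_rs, Σ, ℓ, E*) is a permutation graph for ρ. -/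
/-! A path from layer 0 to layer 5 of the block uses one edge of each of the three two-layer
pieces, joined by identity matchings. Starting in group `i₀ < r/2`, it moves to group
`σ_L(i₀) = L(e_{i₀})`, then along some RS edge `f` with that left endpoint, then to group
`σ_R(R(f))`. Ending inside the first `r/2` groups forces `R(f) = R(e_k)` for some `k`; as `M_ℓ`
is induced, `f ∈ M_ℓ`, and as it is a matching, `f = e_{i₀}`. Within the groups the only
permutation applied is `σ_{ℓ,e_{i₀}}`, which is exactly `ρ`. -/

/-- A layered graph: a DAG whose vertices are partitioned into layers `0,…,d-1`
(layer `i` has `size i` vertices, identified with `{0,…,size i − 1}`), and whose edges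
`edge i u v` go from vertex `u` of layer `i` to vertex `v` of layer `i+1`. -/
structure LayeredGraph where
  d : ℕ
  size : ℕ → ℕ
  edge : ℕ → ℕ → ℕ → Prop

/-- One directed step: from vertex `(i, u)` to vertex `(i+1, v)` along an edge. -/
def LayeredGraph.step (G : LayeredGraph) (p q : ℕ × ℕ) : Prop :=
  q.1 = p.1 + 1 ∧ G.edge p.1 p.2 q.2

/-- Existence of a directed path. -/
def LayeredGraph.Reach (G : LayeredGraph) : ℕ × ℕ → ℕ × ℕ → Prop :=
  Relation.ReflTransGen G.step

/-- `G` is a permutation graph for `σ ∈ S_m`. -/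
def IsPermGraph (G : LayeredGraph) (m : ℕ) (σ : Equiv.Perm (Fin m)) : Prop :=
  0 < G.d ∧ m ≤ G.size 0 ∧ m ≤ G.size (G.d - 1) ∧
    ∀ i j : Fin m, (G.Reach (0, (i : ℕ)) (G.d - 1, (j : ℕ)) ↔ σ i = j)

/-- Concatenation `G₁ ∘ G₂`: `G₂` is traversed first, then `G₁`. -/
def LayeredGraph.concat (G₁ G₂ : LayeredGraph) : LayeredGraph where
  d := G₂.d + G₁.d
  size := fun i => if i < G₂.d then G₂.size i else G₁.size (i - G₂.d)
  edge := fun i u v =>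
    G₂.edge i u v ∨
    (i + 1 = G₂.d ∧ u = v ∧ u < min (G₂.size (G₂.d - 1)) (G₁.size 0)) ∨
    (G₂.d ≤ i ∧ G₁.edge (i - G₂.d) u v)

/-- A bipartite `(r,t)`-Ruzsa–Szemerédi graph on parts `L_rs = R_rs = [nrs]`: its edge
set is partitioned into `t` induced matchings, each of size `r`; edge `j` of matching
`i` has endpoints `Ledge i j ∈ L_rs` and `Redge i j ∈ R_rs`. -/
structure RSGraph (nrs r t : ℕ) where
  Ledge : Fin t → Fin r → Fin nrs
  Redge : Fin t → Fin r → Fin nrs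
  /-- Each `M_i` is a matching on the left. -/
  matchL : ∀ i : Fin t, Function.Injective (Ledge i)
  /-- Each `M_i` is a matching on the right. -/
  matchR : ∀ i : Fin t, Function.Injective (Redge i)
  /-- The matchings partition the edge set (edges are pairwise distinct). -/
  edgePartition : ∀ i i' j j', Ledge i j = Ledge i' j' → Redge i j = Redge i' j' →
    i = i' ∧ j = j'
  /-- Each matching is induced: any edge of the graph joining a left endpoint and a
  right endpoint of matching `i` belongs to matching `i`. -/
  induced : ∀ i i' j' j₁ j₂, Ledge i' j' = Ledge i j₁ → Redge i' j' = Redge i j₂ → i' = i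

/-- A 2-layer graph on `n` vertices per layer, with edge relation `E`. -/
def twoLayer (n : ℕ) (E : ℕ → ℕ → Prop) : LayeredGraph where
  d := 2
  size := fun _ => n
  edge := fun i u v => i = 0 ∧ u < n ∧ v < n ∧ E u v

/-- The group permuting graph `PermGroups(σ, b)`: a 2-layer group-layered graph of
width `w` and group size `b` whose edges send `(a, j) ↦ (σ a, j)` (vertex `(a, j)` is
identified with `a·b + j`). -/
def PermGroups {w : ℕ} (σ : Equiv.Perm (Fin w)) (b : ℕ) : LayeredGraph :=
  twoLayer (w * b) (fun u v => ∃ (a : Fin w) (j : Fin b),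
    u = (a : ℕ) * b + (j : ℕ) ∧ v = ((σ a : Fin w) : ℕ) * b + (j : ℕ))

/-- The encoded RS-graph `Encoded-RS(G_rs, Σ)`: for every `i ∈ [t]`, `j ∈ [r]`, the edge
`e` = edge `j` of matching `i` contributes the `b` edges
`(L(e), a) ↦ (R(e), σ_{i,j}(a))`. -/
def EncodedRS (nrs r t b : ℕ) (G : RSGraph nrs r t)
    (Sg : Fin t → Fin r → Equiv.Perm (Fin b)) : LayeredGraph :=
  twoLayer (nrs * b) (fun u v => ∃ (i : Fin t) (j : Fin r) (a : Fin b),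
    u = ((G.Ledge i j) : ℕ) * b + (a : ℕ) ∧
    v = ((G.Redge i j) : ℕ) * b + (((Sg i j) a : Fin b) : ℕ))

/-- `Block(G_rs, Σ, ℓ, E*) = PermGroups(σ_R, b) ∘ Encoded-RS(G_rs, Σ) ∘ PermGroups(σ_L, b)`,
where `σ_L, σ_R` are the edge picking permutations (any permutations extending the
partial maps `i ↦ L(e_i)` and `R(e_i) ↦ i`). -/
def Block (nrs r t b : ℕ) (G : RSGraph nrs r t) (Sg : Fin t → Fin r → Equiv.Perm (Fin b))
    (σL σR : Equiv.Perm (Fin nrs)) : LayeredGraph :=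
  LayeredGraph.concat (PermGroups σR b)
    (LayeredGraph.concat (EncodedRS nrs r t b G Sg) (PermGroups σL b))

theorem Fin.val_mul_add_val_lt {n b : ℕ} (a : Fin n) (j : Fin b) : (a : ℕ) * b + j < n * b := by
  have : ((a : ℕ) + 1) * b ≤ n * b := Nat.mul_le_mul_right b a.isLt
  rw [Nat.succ_mul] at this
  omega

theorem Nat.mul_add_val_inj {b a a' : ℕ} {j j' : Fin b} :
    a * b + j = a' * b + j' ↔ a = a' ∧ j = j' := by
  have : NeZero b := ⟨j.pos.ne'⟩
  rw [← Prod.mk.injEq]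
  exact (Nat.divModEquiv b).symm.injective.eq_iff (a := (a, j)) (b := (a', j'))

theorem Nat.lt_of_mul_add_lt {a j n b : ℕ} (h : a * b + j < n * b) : a < n :=
  Nat.lt_of_mul_lt_mul_right (by omega : a * b < n * b)

theorem Equiv.Perm.mem_range_of_val_lt {m n : ℕ} (h : m ≤ n) {σ : Equiv.Perm (Fin n)}
    {f : Fin m → Fin n} (hf : ∀ k, σ (f k) = Fin.castLE h k) {v : Fin n} (hv : (σ v : ℕ) < m) :
    v ∈ Set.range f :=
  ⟨⟨σ v, hv⟩, σ.injective (by rw [hf]; rfl)⟩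

theorem RSGraph.eq_of_Ledge_eq_of_Redge_eq {nrs r t : ℕ} (G : RSGraph nrs r t)
    {i ℓ : Fin t} {e e₁ e₂ : Fin r} (hL : G.Ledge i e = G.Ledge ℓ e₁)
    (hR : G.Redge i e = G.Redge ℓ e₂) : i = ℓ ∧ e = e₁ := by
  obtain rfl := G.induced ℓ i e e₁ e₂ hL hR
  exact ⟨rfl, G.matchL i hL⟩

namespace LayeredGraph

variable (G : LayeredGraph)

theorem Reach.fst_le {G : LayeredGraph} {p q : ℕ × ℕ} (h : G.Reach p q) : p.1 ≤ q.1 := by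
  induction h with
  | refl => exact le_rfl
  | tail _ hstep ih => have := hstep.1; omega

theorem reach_same_layer_iff {i u v : ℕ} : G.Reach (i, u) (i, v) ↔ u = v := by
  refine ⟨fun h => ?_, fun h => h ▸ Relation.ReflTransGen.refl⟩
  rcases h.cases_tail with h | ⟨c, hc, hstep⟩
  · simpa [eq_comm] using h
  · have := Reach.fst_le hc
    have := hstep.1
    simp only at *
    omega

theorem reach_succ_iff {i j u v : ℕ} (hij : i ≤ j) :
    G.Reach (i, u) (j + 1, v) ↔ ∃ w, G.Reach (i, u) (j, w) ∧ G.edge j w v := by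
  refine ⟨fun h => ?_, fun ⟨w, hw, hedge⟩ => hw.tail ⟨rfl, hedge⟩⟩
  rcases h.cases_tail with h | ⟨⟨k, w⟩, hc, hk, hw⟩
  · simp only [Prod.mk.injEq] at h
    omega
  · obtain rfl : k = j := by simp only at hk; omega
    exact ⟨w, hc, hw⟩

end LayeredGraph

section Block

variable {nrs r t b : ℕ} (G : RSGraph nrs r t) (Sg : Fin t → Fin r → Equiv.Perm (Fin b))
  (σL σR : Equiv.Perm (Fin nrs))

theorem block_reach_iff (a : Fin nrs) (j : Fin b) (v : ℕ) :
    (Block nrs r t b G Sg σL σR).Reach (0, a * b + j) (5, v) ↔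
      ∃ i e, G.Ledge i e = σL a ∧ v = σR (G.Redge i e) * b + Sg i e j := by
  simp only [LayeredGraph.reach_succ_iff _ (Nat.zero_le _), LayeredGraph.reach_same_layer_iff,
    Block, LayeredGraph.concat, twoLayer, PermGroups, EncodedRS, true_and, min_self,
    false_and, false_or, or_false, or_self, and_false, exists_eq_left', OfNat.one_ne_ofNat,
    OfNat.ofNat_ne_zero, one_ne_zero, nonpos_iff_eq_zero, Nat.succ_ne_self, Nat.add_one_sub_one,
    Nat.not_ofNat_le_one, Order.lt_two_iff, Std.le_refl, ↓reduceIte, Nat.reduceAdd, Nat.reduceSub,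
    Nat.reduceEqDiff, Nat.reduceLeDiff]
  constructor
  -- edges of `PermGroups σL`, identity, `EncodedRS`, identity, `PermGroups σR`
  · rintro ⟨_, ⟨_, ⟨_, ⟨_, ⟨-, -, a', j', ha, rfl⟩, rfl, -⟩, -, -, i, e, c, hL, rfl⟩, rfl, -⟩,
      -, -, a'', j'', hR, rfl⟩
    simp only [Nat.mul_add_val_inj, Fin.val_inj] at ha hL hR
    obtain ⟨rfl, rfl⟩ := ha
    obtain ⟨hL, rfl⟩ := hL
    obtain ⟨rfl, rfl⟩ := hR
    exact ⟨i, e, hL.symm, rfl⟩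
  · rintro ⟨i, e, hL, rfl⟩
    have lt := @Fin.val_mul_add_val_lt
    exact ⟨_, ⟨_, ⟨_, ⟨_, ⟨lt a j, lt _ _, a, j, rfl, rfl⟩, rfl, lt _ _⟩, lt _ _, lt _ _, i, e, j,
      by rw [hL], rfl⟩, rfl, lt _ _⟩, lt _ _, lt _ _, _, _, rfl, rfl⟩

end Block

theorem stmt12_general (nrs r2 t b : ℕ) (hrn : r2 ≤ nrs)
    (G : RSGraph nrs (2 * r2) t) (Sg : Fin t → Fin (2 * r2) → Equiv.Perm (Fin b))
    (ℓ : Fin t) (Estar : Fin r2 → Fin (2 * r2))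
    (σL σR : Equiv.Perm (Fin nrs))
    (hσL : ∀ i : Fin r2, σL (Fin.castLE hrn i) = G.Ledge ℓ (Estar i))
    (hσR : ∀ i : Fin r2, σR (G.Redge ℓ (Estar i)) = Fin.castLE hrn i)
    (ρ : Equiv.Perm (Fin (r2 * b)))
    (hρ : ∀ (i : Fin r2) (a : Fin b) (x y : Fin (r2 * b)),
      (x : ℕ) = (i : ℕ) * b + (a : ℕ) →
      (y : ℕ) = (i : ℕ) * b + (((Sg ℓ (Estar i)) a : Fin b) : ℕ) →
      ρ x = y) :
    IsPermGraph (Block nrs (2 * r2) t b G Sg σL σR) (r2 * b) ρ := by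
  refine ⟨Nat.succ_pos 5, Nat.mul_le_mul_right b hrn, Nat.mul_le_mul_right b hrn, fun x y => ?_⟩
  set i₀ : Fin r2 := x.divNat
  set a₀ : Fin b := x.modNat
  have hx : (x : ℕ) = (Fin.castLE hrn i₀ : ℕ) * b + a₀ := (Nat.div_add_mod' x b).symm
  have hρx : ρ x = ⟨i₀ * b + Sg ℓ (Estar i₀) a₀, Fin.val_mul_add_val_lt _ _⟩ :=
    hρ i₀ a₀ x _ hx rfl
  change (Block nrs (2 * r2) t b G Sg σL σR).Reach (0, x) (5, y) ↔ _
  rw [hx, block_reach_iff, hσL, hρx, Fin.ext_iff, eq_comm]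
  constructor
  · rintro ⟨i, e, hL, hy⟩
    obtain ⟨k, hk⟩ := σR.mem_range_of_val_lt hrn hσR (Nat.lt_of_mul_add_lt (hy ▸ y.isLt))
    obtain ⟨rfl, rfl⟩ := G.eq_of_Ledge_eq_of_Redge_eq hL hk.symm
    rw [hy, hσR, Fin.val_castLE]
  · intro hy
    exact ⟨ℓ, Estar i₀, rfl, by rw [hy, hσR, Fin.val_castLE]⟩

/-- With `r = 2·r2` even, `ℓ ∈ [t]`, `E* = (e₁,…,e_{r/2})` a tuple of
distinct edges of the induced matching `M_ℓ`, `(σ_L, σ_R)` the edge picking permutations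
(extending `i ↦ L(e_i)` and `R(e_i) ↦ i`), and `ρ ∈ S_m` (`m = (r/2)·b`) defined by
`ρ(i·b + a) = i·b + σ_{ℓ,e_i}(a)`, the layered graph `Block(G_rs, Σ, ℓ, E*)` is a
permutation graph for `ρ`. -/
theorem stmt12 (nrs r2 t b : ℕ) (hb : 1 ≤ b) (ht : 1 ≤ t) (hr : 1 ≤ r2) (hrn : r2 ≤ nrs)
    (G : RSGraph nrs (2 * r2) t) (Sg : Fin t → Fin (2 * r2) → Equiv.Perm (Fin b))
    (ℓ : Fin t) (Estar : Fin r2 → Fin (2 * r2)) (hE : Function.Injective Estar)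
    (σL σR : Equiv.Perm (Fin nrs))
    (hσL : ∀ i : Fin r2, σL (Fin.castLE hrn i) = G.Ledge ℓ (Estar i))
    (hσR : ∀ i : Fin r2, σR (G.Redge ℓ (Estar i)) = Fin.castLE hrn i)
    (ρ : Equiv.Perm (Fin (r2 * b)))
    (hρ : ∀ (i : Fin r2) (a : Fin b) (x y : Fin (r2 * b)),
      (x : ℕ) = (i : ℕ) * b + (a : ℕ) →
      (y : ℕ) = (i : ℕ) * b + (((Sg ℓ (Estar i)) a : Fin b) : ℕ) →
      ρ x = y) :
    IsPermGraph (Block nrs (2 * r2) t b G Sg σL σR) (r2 * b) ρ :=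
  stmt12_general nrs r2 t b hrn G Sg ℓ Estar σL σR hσL hσR ρ hρ
end

section
/- Let m be an even positive integer and let G be a layered graph with n vertices such that |First(G)| ≥ m and |Last(G)| ≥ m. (i) If G is a permutation graph for the identity permutation σ_= ∈ S_m, then the bipartite graph Bipartite(G) has a perfect matching (of size n + m/2). (ii) If G is a permutation graph for the permutation σ_× ∈ S_m defined by σ_×(i) = i + m/2 for i ≤ m/2 and σ_×(i) = i − m/2 for i > m/2, then the maximum matching size of Bipartite(G) equals n. -/
open scoped Classical

/-- All edges respect the layer structure. -/
def LayeredGraph.Valid (G : LayeredGraph) : Prop :=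
  ∀ i u v, G.edge i u v → i + 1 < G.d ∧ u < G.size i ∧ v < G.size (i + 1)

/-- The (finite) vertex set of a layered graph: pairs of a layer index and a vertex
index within the layer. -/
abbrev LayeredGraph.Vert (G : LayeredGraph) : Type := Σ i : Fin G.d, Fin (G.size i)

/-- The number of vertices of a layered graph. -/
def LayeredGraph.numVertices (G : LayeredGraph) : ℕ := ∑ i ∈ Finset.range G.d, G.size i

/-- Vertex set of `Bipartite(G)`: `(L ⊕ R) ⊕ (S ⊕ T)`, where `L, R` are copies of the
vertex set of `G` and `|S| = |T| = m/2 = m2`. -/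
abbrev BipVert (G : LayeredGraph) (m2 : ℕ) : Type :=
  (G.Vert ⊕ G.Vert) ⊕ (Fin m2 ⊕ Fin m2)

/-- The base (one-directional) edge relation of `Bipartite(G)`:
* `v^L — v^R` for every vertex `v` (the matching `M`), and `u^L — v^R` for every
  directed edge `(u,v)` of `G`;
* the `i`-th vertex of `S` is joined to `v_i^R`, where `v_i` is vertex `i` of
  `First(G)`;
* the `i`-th vertex of `T` is joined to `w_i^L`, where `w_i` is vertex `i` of
  `Last(G)`. -/
def bipRel (G : LayeredGraph) (m2 : ℕ) : BipVert G m2 → BipVert G m2 → Prop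
  | Sum.inl (Sum.inl v), Sum.inl (Sum.inr w) =>
      v = w ∨ ((w.1 : ℕ) = (v.1 : ℕ) + 1 ∧ G.edge (v.1 : ℕ) (v.2 : ℕ) (w.2 : ℕ))
  | Sum.inr (Sum.inl i), Sum.inl (Sum.inr w) => (w.1 : ℕ) = 0 ∧ (w.2 : ℕ) = (i : ℕ)
  | Sum.inr (Sum.inr i), Sum.inl (Sum.inl v) => (v.1 : ℕ) = G.d - 1 ∧ (v.2 : ℕ) = (i : ℕ)
  | _, _ => False

/-- The bipartite graph `Bipartite(G)` associated with a layered graph `G`. -/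
def BipGraph (G : LayeredGraph) (m2 : ℕ) : SimpleGraph (BipVert G m2) :=
  SimpleGraph.fromRel (bipRel G m2)

namespace Aux14


variable {G : LayeredGraph}

lemma reach_fst_le {p q : ℕ × ℕ} (h : G.Reach p q) : p.1 ≤ q.1 := by
  induction h with
  | refl => exact le_refl _
  | tail _ h2 ih => obtain ⟨h2, _⟩ := h2; omega

lemma reach_self_of_fst_eq {p q : ℕ × ℕ} (h : G.Reach p q) (he : p.1 = q.1) : p = q := by
  induction h with
  | refl => rfl
  | tail h1 h2 ih =>
    obtain ⟨e, _⟩ := h2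
    have := reach_fst_le h1
    omega

/-- Extract a "chain function" from a reachability witness. -/
lemma exists_chain {p q : ℕ × ℕ} (h : G.Reach p q) :
    ∃ g : ℕ → ℕ, g p.1 = p.2 ∧ g q.1 = q.2 ∧
      ∀ k, p.1 ≤ k → k + 1 ≤ q.1 → G.edge k (g k) (g (k + 1)) := by
  induction h with
  | refl => exact ⟨fun _ => p.2, rfl, rfl, fun k h1 h2 => by omega⟩
  | @tail b c h1 h2 ih =>
    obtain ⟨g, hg1, hg2, hg3⟩ := ih
    obtain ⟨hc1, hc2⟩ := h2
    have hpb := reach_fst_le h1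
    refine ⟨Function.update g c.1 c.2, ?_, ?_, ?_⟩
    · rw [Function.update_of_ne (by omega)]; exact hg1
    · rw [Function.update_self]
    · intro k hk1 hk2
      rcases Nat.lt_or_ge (k+1) c.1 with hlt | hge
      · rw [Function.update_of_ne (by omega), Function.update_of_ne (by omega)]
        exact hg3 k hk1 (by omega)
      · have hkb : k = b.1 := by omega
        have hkc : k + 1 = c.1 := by omega
        rw [Function.update_of_ne (by omega), hkc, Function.update_self, hkb, hg2]
        exact hc2

lemma chain_reach (g : ℕ → ℕ) {a b : ℕ}
    (hc : ∀ k, a ≤ k → k + 1 ≤ b → G.edge k (g k) (g (k + 1))) (hab : a ≤ b) :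
    G.Reach (a, g a) (b, g b) := by
  induction b, hab using Nat.le_induction with
  | base => exact Relation.ReflTransGen.refl
  | succ b hab ih =>
    refine Relation.ReflTransGen.tail (ih (fun k h1 h2 => hc k h1 (by omega))) ?_
    exact ⟨rfl, hc b hab (le_refl _)⟩



/-- The fixed-point-free involution realizing the perfect matching in part (i). -/
noncomputable def pathF (G : LayeredGraph) (m2 : ℕ) (hd : 0 < G.d)
    (g : Fin m2 → ℕ → ℕ) (hb : ∀ (i : Fin m2) (k : ℕ), k < G.d → g i k < G.size k) :
    BipVert G m2 → BipVert G m2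
  | Sum.inl (Sum.inl v) =>
      if h : ∃ i : Fin m2, g i (v.1 : ℕ) = (v.2 : ℕ) then
        if hk : (v.1 : ℕ) + 1 < G.d then
          Sum.inl (Sum.inr ⟨⟨(v.1 : ℕ) + 1, hk⟩, ⟨g h.choose ((v.1 : ℕ) + 1), hb _ _ hk⟩⟩)
        else Sum.inr (Sum.inr h.choose)
      else Sum.inl (Sum.inr v)
  | Sum.inl (Sum.inr v) =>
      if h : ∃ i : Fin m2, g i (v.1 : ℕ) = (v.2 : ℕ) then
        if hk : 0 < (v.1 : ℕ) then
          Sum.inl (Sum.inl ⟨⟨(v.1 : ℕ) - 1, lt_of_le_of_lt (Nat.sub_le _ _) v.1.isLt⟩,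
            ⟨g h.choose ((v.1 : ℕ) - 1), hb _ _ (lt_of_le_of_lt (Nat.sub_le _ _) v.1.isLt)⟩⟩)
        else Sum.inr (Sum.inl h.choose)
      else Sum.inl (Sum.inl v)
  | Sum.inr (Sum.inl i) => Sum.inl (Sum.inr ⟨⟨0, hd⟩, ⟨g i 0, hb _ _ hd⟩⟩)
  | Sum.inr (Sum.inr i) =>
      Sum.inl (Sum.inl ⟨⟨G.d - 1, Nat.sub_lt hd one_pos⟩, ⟨g i (G.d - 1), hb _ _ (Nat.sub_lt hd one_pos)⟩⟩)



lemma vert_ext {G : LayeredGraph} {a b : G.Vert} (h1 : (a.1 : ℕ) = (b.1 : ℕ))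
    (h2 : (a.2 : ℕ) = (b.2 : ℕ)) : a = b := by
  obtain ⟨⟨a1, ha1⟩, ⟨a2, ha2⟩⟩ := a
  obtain ⟨⟨b1, hb1⟩, ⟨b2, hb2⟩⟩ := b
  simp only [Fin.val_mk] at h1 h2
  subst h1
  subst h2
  rfl

lemma pathF_invol {G : LayeredGraph} {m2 : ℕ} (hd : 0 < G.d) (g : Fin m2 → ℕ → ℕ)
    (hb : ∀ (i : Fin m2) (k : ℕ), k < G.d → g i k < G.size k)
    (hu : ∀ (i j : Fin m2) (k : ℕ), k < G.d → g i k = g j k → i = j)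
    (h0 : ∀ i : Fin m2, g i 0 = (i : ℕ))
    (hl : ∀ i : Fin m2, g i (G.d - 1) = (i : ℕ)) (x : BipVert G m2) :
    pathF G m2 hd g hb (pathF G m2 hd g hb x) = x := by
  rcases x with (v | v) | (i | i)
  · -- x = v^L
    by_cases h : ∃ i : Fin m2, g i (v.1 : ℕ) = (v.2 : ℕ)
    · have hspec := h.choose_spec
      by_cases hk : (v.1 : ℕ) + 1 < G.d
      · simp only [pathF, dif_pos h, dif_pos hk]
        split_ifs with h2 h3
        · have hs2 := h2.choose_spec
          have : h2.choose = h.choose := hu _ _ _ hk hs2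
          refine congrArg _ (congrArg _ (vert_ext ?_ ?_)) <;> simp [this, hspec]
        · exact absurd (by simp) h3
        · exact absurd ⟨h.choose, rfl⟩ h2
      · simp only [pathF, dif_pos h, dif_neg hk]
        have hv1 : (v.1 : ℕ) = G.d - 1 := by have := v.1.isLt; omega
        refine congrArg _ (congrArg _ (vert_ext ?_ ?_))
        · simp [hv1]
        · have hspec2 : g h.choose (G.d - 1) = (v.2 : ℕ) := by rw [← hv1]; exact hspec
          simpa using hspec2
    · simp only [pathF, dif_neg h]
  · -- x = v^R
    by_cases h : ∃ i : Fin m2, g i (v.1 : ℕ) = (v.2 : ℕ)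
    · have hspec := h.choose_spec
      by_cases hk : 0 < (v.1 : ℕ)
      · simp only [pathF, dif_pos h, dif_pos hk]
        split_ifs with h2 h3
        · have hs2 := h2.choose_spec
          have hc : h2.choose = h.choose :=
            hu _ _ _ (lt_of_le_of_lt (Nat.sub_le _ _) v.1.isLt) hs2
          have hv : (v.1 : ℕ) - 1 + 1 = (v.1 : ℕ) := by omega
          refine congrArg _ (congrArg _ (vert_ext ?_ ?_)) <;> simp [hc, hv, hspec]
        · exfalso; have := v.1.isLt; simp at h3; omega
        · exact absurd ⟨h.choose, rfl⟩ h2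
      · simp only [pathF, dif_pos h, dif_neg hk]
        have hv1 : (v.1 : ℕ) = 0 := by omega
        refine congrArg _ (congrArg _ (vert_ext ?_ ?_))
        · simp [hv1]
        · have hspec2 : g h.choose 0 = (v.2 : ℕ) := by rw [← hv1]; exact hspec
          simpa using hspec2
    · simp only [pathF, dif_neg h]
  · -- x = S_i
    simp only [pathF]
    split_ifs with h2 h3
    · exfalso; have := h2.choose_spec; simp at h3
    · have hs2 := h2.choose_spec
      have : h2.choose = i := by
        apply hu _ _ 0 hd
        rw [hs2, h0]
      rw [this]
    · exact absurd ⟨i, rfl⟩ h2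
  · -- x = T_i
    simp only [pathF]
    split_ifs with h2 h3
    · exfalso; have := h2.choose_spec; omega
    · have hs2 := h2.choose_spec
      have : h2.choose = i := by
        apply hu _ _ (G.d - 1) (Nat.sub_lt hd one_pos)
        rw [hs2, hl]
      rw [this]
    · exact absurd ⟨i, rfl⟩ h2



lemma pathF_adj {G : LayeredGraph} {m2 : ℕ} (hd : 0 < G.d) (g : Fin m2 → ℕ → ℕ)
    (hb : ∀ (i : Fin m2) (k : ℕ), k < G.d → g i k < G.size k)
    (he : ∀ (i : Fin m2) (k : ℕ), k + 1 < G.d → G.edge k (g i k) (g i (k + 1)))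
    (h0 : ∀ i : Fin m2, g i 0 = (i : ℕ))
    (hl : ∀ i : Fin m2, g i (G.d - 1) = (i : ℕ)) (x : BipVert G m2) :
    (BipGraph G m2).Adj x (pathF G m2 hd g hb x) := by
  rw [BipGraph, SimpleGraph.fromRel_adj]
  rcases x with (v | v) | (i | i)
  · by_cases h : ∃ i : Fin m2, g i (v.1 : ℕ) = (v.2 : ℕ)
    · have hspec := h.choose_spec
      by_cases hk : (v.1 : ℕ) + 1 < G.d
      · simp only [pathF, dif_pos h, dif_pos hk]
        refine ⟨by simp, Or.inl (Or.inr ⟨by simp, ?_⟩)⟩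
        simpa [hspec] using he h.choose (v.1 : ℕ) hk
      · simp only [pathF, dif_pos h, dif_neg hk]
        have hv1 : (v.1 : ℕ) = G.d - 1 := by have := v.1.isLt; omega
        refine ⟨by simp, Or.inr ⟨hv1, ?_⟩⟩
        exact hspec.symm.trans ((congrArg (g h.choose) hv1).trans (hl h.choose))
    · simp only [pathF, dif_neg h]
      exact ⟨by simp, Or.inl (Or.inl rfl)⟩
  · by_cases h : ∃ i : Fin m2, g i (v.1 : ℕ) = (v.2 : ℕ)
    · have hspec := h.choose_spec
      by_cases hk : 0 < (v.1 : ℕ)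
      · simp only [pathF, dif_pos h, dif_pos hk]
        refine ⟨by simp, Or.inr (Or.inr ⟨by simp; omega, ?_⟩)⟩
        have hv : (v.1 : ℕ) - 1 + 1 = (v.1 : ℕ) := by omega
        have := he h.choose ((v.1 : ℕ) - 1) (by omega)
        rw [hv, hspec] at this
        simpa using this
      · simp only [pathF, dif_pos h, dif_neg hk]
        have hv1 : (v.1 : ℕ) = 0 := by omega
        refine ⟨by simp, Or.inr ⟨hv1, ?_⟩⟩
        exact hspec.symm.trans ((congrArg (g h.choose) hv1).trans (h0 h.choose))
    · simp only [pathF, dif_neg h]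
      exact ⟨by simp, Or.inr (Or.inl rfl)⟩
  · simp only [pathF]
    exact ⟨by simp, Or.inl ⟨rfl, by simpa using h0 i⟩⟩
  · simp only [pathF]
    exact ⟨by simp, Or.inl ⟨rfl, by simpa using hl i⟩⟩



theorem part1 {m2 : ℕ} (hm2 : 1 ≤ m2) {G : LayeredGraph} (hV : G.Valid) (hd : 0 < G.d)
    (hF : 2 * m2 ≤ G.size 0)
    (hP : IsPermGraph G (2 * m2) (Equiv.refl (Fin (2 * m2)))) :
    ∃ M : (BipGraph G m2).Subgraph, M.IsPerfectMatching := by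
  obtain ⟨-, -, -, hiff⟩ := hP
  have hreach : ∀ i : Fin m2, G.Reach (0, (i : ℕ)) (G.d - 1, (i : ℕ)) := fun i =>
    (hiff ⟨i, by omega⟩ ⟨i, by omega⟩).mpr rfl
  choose g hg0 hgd hge using fun i : Fin m2 => exists_chain (hreach i)
  have h0' : ∀ i : Fin m2, g i 0 = (i : ℕ) := hg0
  have hl' : ∀ i : Fin m2, g i (G.d - 1) = (i : ℕ) := hgd
  have he' : ∀ (i : Fin m2) (k : ℕ), k + 1 < G.d → G.edge k (g i k) (g i (k + 1)) :=
    fun i k hk => hge i k (Nat.zero_le _) (by omega)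
  have hb : ∀ (i : Fin m2) (k : ℕ), k < G.d → g i k < G.size k := by
    intro i k hk
    rcases Nat.eq_zero_or_pos k with rfl | hkpos
    · rw [h0']; omega
    · have hk1 : (k - 1) + 1 < G.d := by omega
      have := (hV _ _ _ (he' i (k - 1) hk1)).2.2
      rwa [Nat.sub_add_cancel hkpos] at this
  have huniq : ∀ (i j : Fin m2) (k : ℕ), k < G.d → g i k = g j k → i = j := by
    intro i j k hk heq
    have r1 : G.Reach (0, g i 0) (k, g i k) :=
      chain_reach (g i) (fun l h1 h2 => he' i l (by omega)) (Nat.zero_le k)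
    have r2 : G.Reach (k, g j k) (G.d - 1, g j (G.d - 1)) :=
      chain_reach (g j) (fun l h1 h2 => he' j l (by omega)) (by omega)
    rw [h0'] at r1
    rw [hl'] at r2
    rw [heq] at r1
    have := (hiff ⟨i, by omega⟩ ⟨j, by omega⟩).mp (r1.trans r2)
    simpa [Fin.ext_iff] using this
  have hinv := pathF_invol hd g hb huniq h0' hl'
  have hadj := pathF_adj hd g hb he' h0' hl'
  refine ⟨⟨Set.univ, fun x y => y = pathF G m2 hd g hb x ∨ x = pathF G m2 hd g hb y,
      ?_, fun _ => Set.mem_univ _, ?_⟩, ?_, fun v => Set.mem_univ v⟩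
  · rintro v w (rfl | rfl)
    · exact hadj v
    · exact (hadj w).symm
  · constructor; rintro v w (rfl | rfl)
    · exact Or.inr rfl
    · exact Or.inl rfl
  · rintro v -
    refine ⟨pathF G m2 hd g hb v, Or.inl rfl, ?_⟩
    rintro y (rfl | rfl)
    · rfl
    · exact (hinv y).symm



lemma card_vert (G : LayeredGraph) : Fintype.card G.Vert = G.numVertices := by
  simp [LayeredGraph.numVertices, Fintype.card_sigma, Fin.sum_univ_eq_sum_range]

theorem part2_lower {m2 : ℕ} (G : LayeredGraph) :
    ∃ M : (BipGraph G m2).Subgraph, M.IsMatching ∧ M.verts.ncard = 2 * G.numVertices := by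
  refine ⟨⟨Set.range Sum.inl,
    fun x y => (∃ v : G.Vert, x = Sum.inl (Sum.inl v) ∧ y = Sum.inl (Sum.inr v)) ∨
               (∃ v : G.Vert, x = Sum.inl (Sum.inr v) ∧ y = Sum.inl (Sum.inl v)),
      ?_, ?_, ?_⟩, ?_, ?_⟩
  · rintro x y (⟨v, rfl, rfl⟩ | ⟨v, rfl, rfl⟩)
    · exact ⟨by simp, Or.inl (Or.inl rfl)⟩
    · exact ⟨by simp, Or.inr (Or.inl rfl)⟩
  · rintro x y (⟨v, rfl, rfl⟩ | ⟨v, rfl, rfl⟩) <;> exact Set.mem_range_self _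
  · constructor; rintro x y (⟨v, rfl, rfl⟩ | ⟨v, rfl, rfl⟩)
    · exact Or.inr ⟨v, rfl, rfl⟩
    · exact Or.inl ⟨v, rfl, rfl⟩
  · rintro x ⟨w, rfl⟩
    rcases w with v | v
    · refine ⟨Sum.inl (Sum.inr v), Or.inl ⟨v, rfl, rfl⟩, ?_⟩
      rintro y (⟨u, hu1, rfl⟩ | ⟨u, hu1, rfl⟩)
      · cases hu1; rfl
      · simp at hu1
    · refine ⟨Sum.inl (Sum.inl v), Or.inr ⟨v, rfl, rfl⟩, ?_⟩
      rintro y (⟨u, hu1, rfl⟩ | ⟨u, hu1, rfl⟩)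
      · simp at hu1
      · cases hu1; rfl
  · show (Set.range Sum.inl).ncard = 2 * G.numVertices
    rw [← Set.image_univ, Set.ncard_image_of_injective _ Sum.inl_injective,
      Set.ncard_univ, Nat.card_eq_fintype_card, Fintype.card_sum, card_vert]
    ring



noncomputable def src {G : LayeredGraph} {m2 : ℕ} (p : BipVert G m2 → BipVert G m2)
    (v : G.Vert) : Option (Fin m2) :=
  match p (Sum.inl (Sum.inr v)) with
  | Sum.inr (Sum.inl i) => some i
  | Sum.inl (Sum.inl w) => if h : (w.1 : ℕ) + 1 = (v.1 : ℕ) then src p w else none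
  | _ => none
termination_by (v.1 : ℕ)
decreasing_by omega

lemma src_S {G : LayeredGraph} {m2 : ℕ} {p : BipVert G m2 → BipVert G m2} {v : G.Vert}
    {i : Fin m2} (h : p (Sum.inl (Sum.inr v)) = Sum.inr (Sum.inl i)) : src p v = some i := by
  rw [src.eq_def, h]

lemma src_W {G : LayeredGraph} {m2 : ℕ} {p : BipVert G m2 → BipVert G m2} {v w : G.Vert}
    (h : p (Sum.inl (Sum.inr v)) = Sum.inl (Sum.inl w)) (hw : (w.1 : ℕ) + 1 = (v.1 : ℕ)) :
    src p v = src p w := by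
  rw [src.eq_def, h]
  simp [hw]



noncomputable def partner {V : Type*} {H : SimpleGraph V} (N : H.Subgraph) (x : V) : V :=
  if h : ∃ y, N.Adj x y then h.choose else x

lemma partner_eq {V : Type*} {H : SimpleGraph V} {N : H.Subgraph} (hN : N.IsMatching)
    {x y : V} (h : N.Adj x y) : partner N x = y := by
  obtain ⟨z, hz, huniq⟩ := hN (N.edge_vert h)
  have he : ∃ y, N.Adj x y := ⟨y, h⟩
  rw [partner, dif_pos he, huniq _ he.choose_spec, huniq _ h]

lemma partner_adj {V : Type*} {H : SimpleGraph V} {N : H.Subgraph} (hN : N.IsMatching)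
    {x : V} (hx : x ∈ N.verts) : N.Adj x (partner N x) := by
  obtain ⟨y, hy, -⟩ := hN hx
  have he : ∃ y, N.Adj x y := ⟨y, hy⟩
  rw [partner, dif_pos he]
  exact he.choose_spec

def isLS {G : LayeredGraph} {m2 : ℕ} : BipVert G m2 → Prop := fun x =>
  (∃ v : G.Vert, x = Sum.inl (Sum.inl v)) ∨ (∃ i : Fin m2, x = Sum.inr (Sum.inl i))

lemma isLS_L {G : LayeredGraph} {m2 : ℕ} (v : G.Vert) :
    isLS (Sum.inl (Sum.inl v) : BipVert G m2) := Or.inl ⟨v, rfl⟩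

lemma isLS_S {G : LayeredGraph} {m2 : ℕ} (i : Fin m2) :
    isLS (Sum.inr (Sum.inl i) : BipVert G m2) := Or.inr ⟨i, rfl⟩

lemma not_isLS_R {G : LayeredGraph} {m2 : ℕ} (v : G.Vert) :
    ¬ isLS (Sum.inl (Sum.inr v) : BipVert G m2) := by
  rintro (⟨w, h⟩ | ⟨i, h⟩) <;> simp at h

lemma not_isLS_T {G : LayeredGraph} {m2 : ℕ} (i : Fin m2) :
    ¬ isLS (Sum.inr (Sum.inr i) : BipVert G m2) := by
  rintro (⟨w, h⟩ | ⟨i', h⟩) <;> simp at h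



theorem part2_upper {m2 : ℕ} (hm2 : 1 ≤ m2) {G : LayeredGraph} (hd : 0 < G.d)
    (hF : 2 * m2 ≤ G.size 0)
    (σx : Equiv.Perm (Fin (2 * m2)))
    (hσ : ∀ i : Fin (2 * m2), (σx i : ℕ) = if (i : ℕ) < m2 then (i : ℕ) + m2 else (i : ℕ) - m2)
    (hP : IsPermGraph G (2 * m2) σx)
    (N : (BipGraph G m2).Subgraph) (hN : N.IsMatching) :
    N.verts.ncard ≤ 2 * G.numVertices := by
  classical
  -- Structure of partners
  have hL : ∀ v : G.Vert, Sum.inl (Sum.inl v) ∈ N.verts →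
      (∃ w : G.Vert, partner N (Sum.inl (Sum.inl v)) = Sum.inl (Sum.inr w) ∧
        (v = w ∨ ((w.1 : ℕ) = (v.1 : ℕ) + 1 ∧ G.edge (v.1 : ℕ) (v.2 : ℕ) (w.2 : ℕ)))) ∨
      (∃ j : Fin m2, partner N (Sum.inl (Sum.inl v)) = Sum.inr (Sum.inr j) ∧
        (v.1 : ℕ) = G.d - 1 ∧ (v.2 : ℕ) = (j : ℕ)) := by
    intro v hv
    have hadj := partner_adj hN hv
    have hbip := N.adj_sub hadj
    replace hbip := (SimpleGraph.fromRel_adj (bipRel G m2) _ _).mp hbip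
    obtain ⟨-, hbip⟩ := hbip
    set y := partner N (Sum.inl (Sum.inl v)) with hy
    clear_value y
    rcases y with (u | w) | (i | j)
    · rcases hbip with h | h <;> simp [bipRel] at h
    · left
      refine ⟨w, rfl, ?_⟩
      rcases hbip with h | h
      · exact h
      · simp [bipRel] at h
    · rcases hbip with h | h <;> simp [bipRel] at h
    · right
      refine ⟨j, rfl, ?_⟩
      rcases hbip with h | h
      · simp [bipRel] at h
      · exact h
  have hS : ∀ i : Fin m2, Sum.inr (Sum.inl i) ∈ N.verts →
      ∃ w : G.Vert, partner N (Sum.inr (Sum.inl i)) = Sum.inl (Sum.inr w) ∧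
        (w.1 : ℕ) = 0 ∧ (w.2 : ℕ) = (i : ℕ) := by
    intro i hi
    have hadj := partner_adj hN hi
    have hbip := N.adj_sub hadj
    replace hbip := (SimpleGraph.fromRel_adj (bipRel G m2) _ _).mp hbip
    obtain ⟨-, hbip⟩ := hbip
    set y := partner N (Sum.inr (Sum.inl i)) with hy
    clear_value y
    rcases y with (u | w) | (i' | j)
    · rcases hbip with h | h <;> simp [bipRel] at h
    · refine ⟨w, rfl, ?_⟩
      rcases hbip with h | h
      · exact h
      · simp [bipRel] at h
    · rcases hbip with h | h <;> simp [bipRel] at h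
    · rcases hbip with h | h <;> simp [bipRel] at h
  -- The forward chain argument
  have claimA : ∀ (k : ℕ) (v : G.Vert), G.d ≤ (v.1 : ℕ) + k →
      Sum.inl (Sum.inr v) ∈ N.verts →
      partner N (Sum.inl (Sum.inr v)) ≠ Sum.inl (Sum.inl v) →
      (∃ i : Fin (2 * m2), (i : ℕ) < m2 ∧ G.Reach (0, (i : ℕ)) ((v.1 : ℕ), (v.2 : ℕ))) →
      ∃ u : G.Vert, Sum.inl (Sum.inl u) ∉ N.verts ∧
        src (partner N) u = src (partner N) v := by
    intro k
    induction k with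
    | zero => intro v hk; have := v.1.isLt; omega
    | succ k ih =>
      intro v hk hv hne hreach
      by_cases hvl : Sum.inl (Sum.inl v) ∈ N.verts
      · rcases hL v hvl with ⟨w, hpw, hw⟩ | ⟨j, hpj, hj1, hj2⟩
        · rcases hw with heq | ⟨hw1, hw2⟩
          · exfalso
            apply hne
            subst heq
            have hadj : N.Adj (Sum.inl (Sum.inl v)) (Sum.inl (Sum.inr v)) := by
              rw [← hpw]; exact partner_adj hN hvl
            exact partner_eq hN hadj.symm
          · have hadj : N.Adj (Sum.inl (Sum.inl v)) (Sum.inl (Sum.inr w)) := by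
              rw [← hpw]; exact partner_adj hN hvl
            have hwv : Sum.inl (Sum.inr w) ∈ N.verts := N.edge_vert hadj.symm
            have hpw' : partner N (Sum.inl (Sum.inr w)) = Sum.inl (Sum.inl v) :=
              partner_eq hN hadj.symm
            have hsrc : src (partner N) w = src (partner N) v := src_W hpw' (by omega)
            obtain ⟨i, him, hir⟩ := hreach
            have hne' : partner N (Sum.inl (Sum.inr w)) ≠ Sum.inl (Sum.inl w) := by
              rw [hpw']
              intro hcon
              have : v = w := by injection (Sum.inl_injective hcon)
              rw [this] at hw1; omega
            obtain ⟨u, hu1, hu2⟩ := ih w (by omega) hwv hne'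
              ⟨i, him, hir.tail ⟨hw1, hw2⟩⟩
            exact ⟨u, hu1, hu2.trans hsrc⟩
        · exfalso
          obtain ⟨i, him, hir⟩ := hreach
          have hpair : (((v.1 : ℕ)), ((v.2 : ℕ))) = ((G.d - 1 : ℕ), ((j : ℕ))) :=
            Prod.ext hj1 hj2
          have hr : G.Reach (0, (i : ℕ)) (G.d - 1, (j : ℕ)) := hpair ▸ hir
          have hsig := (hP.2.2.2 i ⟨(j : ℕ), by omega⟩).mp hr
          have hval := congrArg Fin.val hsig
          rw [hσ i] at hval
          simp only [him, if_pos] at hval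
          have : (i : ℕ) + m2 = (j : ℕ) := hval
          have := j.isLt
          omega
      · exact ⟨v, hvl, rfl⟩
  -- terminal vertices for covered S-vertices
  have hterm : ∀ i : Fin m2, Sum.inr (Sum.inl i) ∈ N.verts →
      ∃ u : G.Vert, Sum.inl (Sum.inl u) ∉ N.verts ∧ src (partner N) u = some i := by
    intro i hi
    obtain ⟨w, hpw, hw1, hw2⟩ := hS i hi
    have hadj : N.Adj (Sum.inr (Sum.inl i)) (Sum.inl (Sum.inr w)) := by
      rw [← hpw]; exact partner_adj hN hi
    have hwv : Sum.inl (Sum.inr w) ∈ N.verts := N.edge_vert hadj.symm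
    have hps : partner N (Sum.inl (Sum.inr w)) = Sum.inr (Sum.inl i) :=
      partner_eq hN hadj.symm
    have hsrc : src (partner N) w = some i := src_S hps
    have hne : partner N (Sum.inl (Sum.inr w)) ≠ Sum.inl (Sum.inl w) := by
      rw [hps]; simp
    have hreach : ∃ i' : Fin (2 * m2), (i' : ℕ) < m2 ∧
        G.Reach (0, (i' : ℕ)) ((w.1 : ℕ), (w.2 : ℕ)) := by
      refine ⟨⟨(i : ℕ), by omega⟩, by simpa using i.isLt, ?_⟩
      have hpair : ((0 : ℕ), ((i : ℕ))) = ((w.1 : ℕ), (w.2 : ℕ)) :=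
        (Prod.ext hw1 hw2).symm
      exact hpair ▸ Relation.ReflTransGen.refl
    obtain ⟨u, hu1, hu2⟩ := claimA G.d w (by omega) hwv hne hreach
    exact ⟨u, hu1, hu2.trans hsrc⟩
  -- sides
  have hswap : ∀ x y, N.Adj x y → (isLS x ↔ ¬ isLS y) := by
    intro x y hxy
    have hbip := N.adj_sub hxy
    simp only [BipGraph, SimpleGraph.fromRel_adj] at hbip
    obtain ⟨-, hbip⟩ := hbip
    rcases x with (v | v) | (i | i) <;> rcases y with (w | w) | (j | j) <;>
      first
        | (rcases hbip with h | h <;> exact h.elim)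
        | simp [isLS_L, isLS_S, not_isLS_R, not_isLS_T]
  have v0 : G.Vert := ⟨⟨0, hd⟩, ⟨0, lt_of_lt_of_le (by omega) hF⟩⟩
  have hφex : ∀ i : Fin m2, ∃ u : G.Vert, Sum.inr (Sum.inl i) ∈ N.verts →
      (Sum.inl (Sum.inl u) ∉ N.verts ∧ src (partner N) u = some i) := by
    intro i
    by_cases hi : Sum.inr (Sum.inl i) ∈ N.verts
    · obtain ⟨u, hu⟩ := hterm i hi
      exact ⟨u, fun _ => hu⟩
    · exact ⟨v0, fun h => absurd h hi⟩
  choose φ hφ using hφex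
  set A := N.verts ∩ {x | isLS x} with hA
  set B := N.verts ∩ {x | ¬ isLS x} with hB
  have hunion : A ∪ B = N.verts := by
    ext x
    simp only [hA, hB, Set.mem_union, Set.mem_inter_iff, Set.mem_setOf_eq]
    tauto
  have hdisj : Disjoint A B := by
    rw [Set.disjoint_left]
    rintro x ⟨-, hx⟩ ⟨-, hx'⟩
    exact hx' hx
  have hcard : N.verts.ncard = A.ncard + B.ncard := by
    rw [← hunion, Set.ncard_union_eq hdisj (Set.toFinite _) (Set.toFinite _)]
  have hinv2 : ∀ x ∈ N.verts, partner N (partner N x) = x := fun x hx =>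
    partner_eq hN (partner_adj hN hx).symm
  have hmapsto : ∀ x ∈ A, partner N x ∈ B := by
    rintro x ⟨hx1, hx2⟩
    have hadj := partner_adj hN hx1
    exact ⟨N.edge_vert hadj.symm, fun hls => ((hswap x _ hadj).mp hx2) hls⟩
  have hBeq : B = partner N '' A := by
    apply Set.Subset.antisymm
    · rintro x ⟨hx1, hx2⟩
      refine ⟨partner N x, ⟨N.edge_vert (partner_adj hN hx1).symm, ?_⟩, hinv2 x hx1⟩
      simp only [Set.mem_setOf_eq] at hx2 ⊢
      exact by_contra fun hc => hx2 ((hswap x _ (partner_adj hN hx1)).mpr hc)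
    · rintro _ ⟨x, hx, rfl⟩
      exact hmapsto x hx
  have hBcard : B.ncard = A.ncard := by
    rw [hBeq]
    apply Set.ncard_image_of_injOn
    intro x hx y hy hxy
    rw [← hinv2 x hx.1, ← hinv2 y hy.1, hxy]
  -- injection from A into the vertices of G
  have hinj : Set.InjOn (Sum.elim (Sum.elim id fun _ => v0) (Sum.elim φ fun _ => v0)) A := by
    rintro x ⟨hx1, hx2⟩ y ⟨hy1, hy2⟩ hxy
    simp only [Set.mem_setOf_eq, isLS] at hx2 hy2
    rcases hx2 with ⟨v, rfl⟩ | ⟨i, rfl⟩ <;> rcases hy2 with ⟨w, rfl⟩ | ⟨j, rfl⟩ <;>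
        simp only [Sum.elim_inl, Sum.elim_inr, id] at hxy
    · rw [hxy]
    · exfalso
      rw [hxy] at hx1
      exact (hφ j hy1).1 hx1
    · exfalso
      rw [← hxy] at hy1
      exact (hφ i hx1).1 hy1
    · have h1 := (hφ i hx1).2
      have h2 := (hφ j hy1).2
      rw [hxy, h2] at h1
      have : i = j := (Option.some.inj h1).symm
      rw [this]
  have hAcard : A.ncard ≤ G.numVertices := by
    have h1 : A.ncard = ((Sum.elim (Sum.elim id fun _ => v0) (Sum.elim φ fun _ => v0)) '' A).ncard :=
      (Set.ncard_image_of_injOn hinj).symm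
    have h2 := Set.ncard_le_ncard
      (Set.subset_univ ((Sum.elim (Sum.elim id fun _ => v0) (Sum.elim φ fun _ => v0)) '' A))
      Set.finite_univ
    rw [Set.ncard_univ, Nat.card_eq_fintype_card, card_vert G] at h2
    omega
  omega



end Aux14

/-- Let `m = 2·m2` be even and `G` a layered graph with
`|First(G)|, |Last(G)| ≥ m` and `n` vertices.
(i)  If `G` is a permutation graph for the identity `σ_=`, then `Bipartite(G)` has a
perfect matching (necessarily of size `n + m/2`).
(ii) If `G` is a permutation graph for the "cross identity" `σ_×` (`i ↦ i + m/2` for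
`i ≤ m/2` and `i ↦ i − m/2` otherwise), then the maximum matching size of
`Bipartite(G)` equals `n` (a matching covers `2·n` vertices). -/
theorem stmt14 (m2 : ℕ) (hm2 : 1 ≤ m2) (G : LayeredGraph) (hV : G.Valid)
    (hd : 0 < G.d) (hF : 2 * m2 ≤ G.size 0) (hL : 2 * m2 ≤ G.size (G.d - 1)) :
    (IsPermGraph G (2 * m2) (Equiv.refl (Fin (2 * m2))) →
        ∃ M : (BipGraph G m2).Subgraph, M.IsPerfectMatching) ∧
    (∀ σx : Equiv.Perm (Fin (2 * m2)),
        (∀ i : Fin (2 * m2), (σx i : ℕ) = if (i : ℕ) < m2 then (i : ℕ) + m2 else (i : ℕ) - m2) →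
        IsPermGraph G (2 * m2) σx →
        ((∃ M : (BipGraph G m2).Subgraph,
            M.IsMatching ∧ M.verts.ncard = 2 * G.numVertices) ∧
         (∀ M : (BipGraph G m2).Subgraph,
            M.IsMatching → M.verts.ncard ≤ 2 * G.numVertices))) := by
  constructor
  · intro hP
    exact Aux14.part1 hm2 hV hd hF hP
  · intro σx hσ hP
    refine ⟨Aux14.part2_lower G, ?_⟩
    intro M hM
    exact Aux14.part2_upper hm2 hd hF σx hσ hP M hM
end
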